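/- arXiv:1810.05084 — 5 statements merged into one kernel-verified Lean document; each statement's English description precedes it below -/
import Mathlib

section
/- Let G be a finite group, H a normal subgroup of prime index p, and F an algebraically closed field of characteristic 0 or coprime to |G|. Let η be an irreducible F-representation of H whose G/H-orbit under the conjugation action is a singleton (i.e., η^g is equivalent to η for every g in G). Then η extends to a representation of G, and there are exactly p pairwise inequivalent irreducible representations ρ_1, …, ρ_p of G whose restriction to H is equivalent to η. -/
open scoped TensorProduct

section Defs

variable {k : Type*} [Field k] {M : Type*} [Monoid M]

/-- Equivalence (isomorphism) of representations of a monoid over a field. -/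
def RepIso {V W : Type*} [AddCommGroup V] [Module k V] [AddCommGroup W] [Module k W]
    (ρ : Representation k M V) (ρ' : Representation k M W) : Prop :=
  ∃ e : V ≃ₗ[k] W, ∀ (g : M) (v : V), e (ρ g v) = ρ' g (e v)

/-- Irreducibility of a representation: the space is nonzero and has no proper nonzero
invariant subspace. -/
def RepIrred {V : Type*} [AddCommGroup V] [Module k V] (ρ : Representation k M V) : Prop :=
  Nontrivial V ∧ ∀ U : Submodule k V, (∀ g : M, ∀ v ∈ U, ρ g v ∈ U) → U = ⊥ ∨ U = ⊤

variable {G : Type*} [Group G]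

/-- Conjugation by `x` as a monoid homomorphism of a normal subgroup. -/
def conjHom {H : Subgroup G} (hH : H.Normal) (x : G) : H →* H :=
  MonoidHom.mk' (fun h => ⟨x * (h : G) * x⁻¹, hH.conj_mem (h : G) h.2 x⟩)
    (by intro a b; ext; push_cast; group)

/-- The conjugate representation `η^x`, `η^x(h) = η (x h x⁻¹)`. -/
def ConjRep {H : Subgroup G} (hH : H.Normal) (x : G) {V : Type*} [AddCommGroup V] [Module k V]
    (η : Representation k H V) : Representation k H V :=
  η.comp (conjHom hH x)

/-- `ρ` is (a model of) the representation of `G` induced from the representation `η` of the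
subgroup `H`: there is an `H`-equivariant embedding `ι : V → W` and `W` is the internal direct
sum, over the cosets `gH`, of the translates `ρ(g)(ι V)`. -/
def IsInducedFrom (H : Subgroup G) {V W : Type*} [AddCommGroup V] [Module k V]
    [AddCommGroup W] [Module k W]
    (η : Representation k H V) (ρ : Representation k G W) : Prop :=
  ∃ ι : V →ₗ[k] W, Function.Injective ι ∧
    (∀ (h : H) (v : V), ι (η h v) = ρ (h : G) (ι v)) ∧
    ∃ S : G ⧸ H → Submodule k W,
      (∀ g : G, S (g : G ⧸ H) = (LinearMap.range ι).map (ρ g)) ∧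
      iSupIndep S ∧ iSup S = ⊤

/-- The subrepresentation on an invariant subspace. -/
def SubRep {V : Type*} [AddCommGroup V] [Module k V] (ρ : Representation k M V)
    (U : Submodule k V) (hU : ∀ g : M, ∀ v ∈ U, ρ g v ∈ U) : Representation k M U where
  toFun g := LinearMap.restrict (ρ g) (hU g)
  map_one' := by ext v; simp [LinearMap.restrict_apply]
  map_mul' g g' := by ext v; simp [LinearMap.restrict_apply]

/-- The direct sum of a family of representations (realized on the product space). -/
def PiRep {ι : Type*} {W : ι → Type*} [∀ i, AddCommGroup (W i)] [∀ i, Module k (W i)]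
    (ρ : ∀ i, Representation k M (W i)) : Representation k M (∀ i, W i) where
  toFun g := LinearMap.pi fun i => (ρ i g).comp (LinearMap.proj i)
  map_one' := by ext v; simp
  map_mul' g g' := by ext v; simp

/-- Extension of scalars of a representation along a field extension `F ⊆ E`. -/
noncomputable def BaseChangeRep {F : Type*} [Field F] (E : Type*) [Field E] [Algebra F E]
    {V : Type*} [AddCommGroup V] [Module F V] (ρ : Representation F M V) :
    Representation E M (E ⊗[F] V) where
  toFun g := LinearMap.baseChange E (ρ g)
  map_one' := by ext v; simp
  map_mul' g g' := by ext v; simp [map_mul]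

open scoped Classical in
/-- The conjugacy class sum of `x` in the group algebra. -/
noncomputable def classSum (k : Type*) [Field k] {G : Type*} [Group G] [Fintype G] (x : G) :
    MonoidAlgebra k G :=
  ∑ g : G, if IsConj x g then MonoidAlgebra.single g (1 : k) else 0

/-- A primitive central idempotent of a ring. -/
def IsPrimCentralIdem {R : Type*} [Ring R] (e : R) : Prop :=
  e ≠ 0 ∧ IsIdempotentElem e ∧ e ∈ Set.center R ∧
    ∀ f : R, f ∈ Set.center R → IsIdempotentElem f → f * e = f → f = 0 ∨ f = e

/-- `e` is the primitive central idempotent of the group algebra attached to the irreducible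
representation `ρ`: it is a primitive central idempotent acting as the identity on `ρ`. -/
noncomputable def IsIdemFor {V : Type*} [AddCommGroup V] [Module k V]
    (ρ : Representation k M V) (e : MonoidAlgebra k M) : Prop :=
  IsPrimCentralIdem e ∧ ρ.asAlgebraHom e = 1

/-- `ρ'` is the twist of the `E`-representation `ρ` by the automorphism `γ` of `E` over `F`. -/
def IsTwist {F E : Type*} [Field F] [Field E] [Algebra F E]
    {V W : Type*} [AddCommGroup V] [Module E V] [AddCommGroup W] [Module E W]
    (γ : E ≃ₐ[F] E) (ρ : Representation E M V) (ρ' : Representation E M W) : Prop :=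
  ∃ e : V ≃+ W, (∀ (c : E) (v : V), e (c • v) = γ c • e v) ∧
    ∀ (g : M) (v : V), e (ρ g v) = ρ' g (e v)

/-- Two `E`-representations are Galois conjugate over `F`. -/
def IsGaloisConj (F : Type*) {E : Type*} [Field F] [Field E] [Algebra F E]
    {V W : Type*} [AddCommGroup V] [Module E V] [AddCommGroup W] [Module E W]
    (ρ : Representation E M V) (ρ' : Representation E M W) : Prop :=
  ∃ γ : E ≃ₐ[F] E, IsTwist γ ρ ρ'

/-- The canonical embedding of the group algebra of a subgroup into the group algebra
of the ambient group. -/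
noncomputable def algEmb (k : Type*) [Field k] {G : Type*} [Group G] (H : Subgroup G) :
    MonoidAlgebra k H →ₐ[k] MonoidAlgebra k G :=
  MonoidAlgebra.mapDomainAlgHom k k H.subtype

end Defs


section AuxLemmas

variable {F : Type*} [Field F] {M : Type*} [Monoid M] {V : Type*} [AddCommGroup V] [Module F V]


lemma aux_findim [Finite M] (η : Representation F M V) (hirr : RepIrred η) :
    FiniteDimensional F V := by
  obtain ⟨hnt, hsub⟩ := hirr
  obtain ⟨v, hv⟩ := exists_ne (0 : V)
  set U : Submodule F V := Submodule.span F (Set.range fun m : M => η m v) with hUdef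
  have hinv : ∀ g : M, ∀ w ∈ U, η g w ∈ U := by
    intro g w hw
    have hle : Submodule.map (η g) U ≤ U := by
      rw [hUdef, Submodule.map_span]
      refine Submodule.span_le.mpr ?_
      rintro _ ⟨_, ⟨m, rfl⟩, rfl⟩
      exact Submodule.subset_span ⟨g * m, by simp [map_mul, Module.End.mul_apply]⟩
    exact hle ⟨w, hw, rfl⟩
  have hU : U = ⊤ := by
    rcases hsub U hinv with h | h
    · exfalso
      have hvU : v ∈ U := Submodule.subset_span ⟨1, by simp⟩
      rw [h] at hvU
      exact hv (by simpa using hvU)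
    · exact h
  have hfin : FiniteDimensional F U := FiniteDimensional.span_of_finite F (Set.finite_range _)
  rw [hU] at hfin
  exact Submodule.topEquiv.finiteDimensional

lemma aux_schur [IsAlgClosed F] [Finite M] (η : Representation F M V) (hirr : RepIrred η)
    (f : Module.End F V) (hf : ∀ m : M, f * η m = η m * f) :
    ∃ c : F, f = c • (1 : Module.End F V) := by
  have hfd : FiniteDimensional F V := aux_findim η hirr
  have hnt : Nontrivial V := hirr.1
  obtain ⟨c, hc⟩ := Module.End.exists_eigenvalue f
  refine ⟨c, ?_⟩
  have hinv : ∀ g : M, ∀ w ∈ f.eigenspace c, η g w ∈ f.eigenspace c := by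
    intro g w hw
    rw [Module.End.mem_eigenspace_iff] at hw ⊢
    have h1 := congrArg (fun T : Module.End F V => T w) (hf g)
    simp only [Module.End.mul_apply] at h1
    rw [h1, hw, map_smul]
  rcases hirr.2 _ hinv with h | h
  · exact absurd h hc
  · ext w
    have hw : w ∈ f.eigenspace c := h ▸ Submodule.mem_top
    rw [Module.End.mem_eigenspace_iff] at hw
    simpa using hw

lemma aux_pow_mul_pow {N : Type*} [Monoid N] {a b : N} (h : a * b = 1) (n : ℕ) :
    a ^ n * b ^ n = 1 := by
  induction n with
  | zero => simp
  | succ n ih =>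
    calc a ^ (n + 1) * b ^ (n + 1) = a * ((a ^ n * b ^ n) * b) := by
          rw [pow_succ' a, pow_succ b]; simp [mul_assoc]
      _ = 1 := by rw [ih, one_mul, h]

end AuxLemmas

section ExtAux

variable {F : Type*} [Field F] {G : Type*} [Group G] {H : Subgroup G}
  {V : Type*} [AddCommGroup V] [Module F V]

lemma aux_conj_pow_mem (g₀ : G) (hconj : ∀ h : H, g₀ * ↑h * g₀⁻¹ ∈ H) :
    ∀ (n : ℕ) (h : H), g₀ ^ n * ↑h * (g₀ ^ n)⁻¹ ∈ H := by
  intro n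
  induction n with
  | zero => intro h; simpa using h.2
  | succ n ih =>
    intro h
    have heq : g₀ ^ (n + 1) * ↑h * (g₀ ^ (n + 1))⁻¹
        = g₀ * (g₀ ^ n * ↑h * (g₀ ^ n)⁻¹) * g₀⁻¹ := by
      rw [pow_succ']; group
    rw [heq]
    exact hconj ⟨_, ih h⟩

lemma aux_T_pow_comm (η : Representation F H V) (g₀ : G) (T : Module.End F V)
    (hconj : ∀ h : H, g₀ * ↑h * g₀⁻¹ ∈ H)
    (hR1 : ∀ h : H, T * η h = η ⟨g₀ * ↑h * g₀⁻¹, hconj h⟩ * T) :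
    ∀ (n : ℕ) (h : H), T ^ n * η h
      = η ⟨g₀ ^ n * ↑h * (g₀ ^ n)⁻¹, aux_conj_pow_mem g₀ hconj n h⟩ * T ^ n := by
  intro n
  induction n with
  | zero =>
    intro h
    have he : (⟨g₀ ^ 0 * ↑h * (g₀ ^ 0)⁻¹, aux_conj_pow_mem g₀ hconj 0 h⟩ : H) = h := by
      ext; simp
    rw [pow_zero, he, one_mul, mul_one]
  | succ n ih =>
    intro h
    have he : (⟨g₀ ^ (n+1) * ↑h * (g₀ ^ (n+1))⁻¹, aux_conj_pow_mem g₀ hconj (n+1) h⟩ : H)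
        = ⟨g₀ * ↑(⟨g₀ ^ n * ↑h * (g₀ ^ n)⁻¹, aux_conj_pow_mem g₀ hconj n h⟩ : H) * g₀⁻¹,
            hconj _⟩ := by
      ext
      show g₀ ^ (n+1) * ↑h * (g₀ ^ (n+1))⁻¹ = g₀ * (g₀ ^ n * ↑h * (g₀ ^ n)⁻¹) * g₀⁻¹
      rw [pow_succ']; group
    calc T ^ (n + 1) * η h = T * (T ^ n * η h) := by rw [pow_succ', mul_assoc]
      _ = T * (η ⟨g₀ ^ n * ↑h * (g₀ ^ n)⁻¹, aux_conj_pow_mem g₀ hconj n h⟩ * T ^ n) := by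
          rw [ih h]
      _ = (T * η ⟨g₀ ^ n * ↑h * (g₀ ^ n)⁻¹, aux_conj_pow_mem g₀ hconj n h⟩) * T ^ n :=
          (mul_assoc _ _ _).symm
      _ = η ⟨g₀ ^ (n+1) * ↑h * (g₀ ^ (n+1))⁻¹, aux_conj_pow_mem g₀ hconj (n+1) h⟩ * T ^ (n+1) := by
          rw [hR1, he, mul_assoc, ← pow_succ']

lemma aux_val_indep_le (η : Representation F H V) (g₀ : G) (T : Module.End F V)
    (p : ℕ) (c : F) (hzmem : g₀ ^ p ∈ H) (hT : T ^ p = η ⟨g₀ ^ p, hzmem⟩) (hc : c ^ p = 1)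
    (g : G) (a b : ℕ) (hle : a ≤ b) (hab : a ≡ b [MOD p])
    (ha : g * (g₀ ^ a)⁻¹ ∈ H) (hb : g * (g₀ ^ b)⁻¹ ∈ H) :
    c ^ a • (η ⟨g * (g₀ ^ a)⁻¹, ha⟩ * T ^ a) = c ^ b • (η ⟨g * (g₀ ^ b)⁻¹, hb⟩ * T ^ b) := by
  obtain ⟨m, hm⟩ : ∃ m, b = a + p * m := by
    obtain ⟨m, hm⟩ := (Nat.modEq_iff_dvd' hle).mp hab
    exact ⟨m, by omega⟩
  subst hm
  have hcb : c ^ (a + p * m) = c ^ a := by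
    rw [pow_add, pow_mul, hc, one_pow, mul_one]
  rw [hcb]
  congr 1
  have h1 : T ^ (a + p * m) = η ((⟨g₀ ^ p, hzmem⟩ : H) ^ m) * T ^ a := by
    rw [map_pow, ← hT, ← pow_mul, add_comm, pow_add]
  rw [h1, ← mul_assoc, ← map_mul]
  congr 2
  ext
  show g * (g₀ ^ a)⁻¹ = g * (g₀ ^ (a + p * m))⁻¹ * ↑((⟨g₀ ^ p, hzmem⟩ : H) ^ m)
  rw [SubgroupClass.coe_pow]
  rw [← pow_mul, pow_add]
  group

lemma aux_val_indep (η : Representation F H V) (g₀ : G) (T : Module.End F V)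
    (p : ℕ) (c : F) (hzmem : g₀ ^ p ∈ H) (hT : T ^ p = η ⟨g₀ ^ p, hzmem⟩) (hc : c ^ p = 1)
    (g : G) (a b : ℕ) (hab : a ≡ b [MOD p])
    (ha : g * (g₀ ^ a)⁻¹ ∈ H) (hb : g * (g₀ ^ b)⁻¹ ∈ H) :
    c ^ a • (η ⟨g * (g₀ ^ a)⁻¹, ha⟩ * T ^ a) = c ^ b • (η ⟨g * (g₀ ^ b)⁻¹, hb⟩ * T ^ b) := by
  rcases le_total a b with h | h
  · exact aux_val_indep_le η g₀ T p c hzmem hT hc g a b h hab ha hb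
  · exact (aux_val_indep_le η g₀ T p c hzmem hT hc g b a h hab.symm hb ha).symm

lemma aux_val_mul (η : Representation F H V) (g₀ : G) (T : Module.End F V)
    (hconj : ∀ h : H, g₀ * ↑h * g₀⁻¹ ∈ H)
    (hR1 : ∀ h : H, T * η h = η ⟨g₀ * ↑h * g₀⁻¹, hconj h⟩ * T)
    (g₁ g₂ : G) (a b : ℕ)
    (h1 : g₁ * (g₀ ^ a)⁻¹ ∈ H) (h2 : g₂ * (g₀ ^ b)⁻¹ ∈ H)
    (h12 : g₁ * g₂ * (g₀ ^ (a + b))⁻¹ ∈ H) :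
    (η ⟨g₁ * (g₀ ^ a)⁻¹, h1⟩ * T ^ a) * (η ⟨g₂ * (g₀ ^ b)⁻¹, h2⟩ * T ^ b)
      = η ⟨g₁ * g₂ * (g₀ ^ (a + b))⁻¹, h12⟩ * T ^ (a + b) := by
  have h3 := aux_T_pow_comm η g₀ T hconj hR1 a ⟨g₂ * (g₀ ^ b)⁻¹, h2⟩
  calc (η ⟨g₁ * (g₀ ^ a)⁻¹, h1⟩ * T ^ a) * (η ⟨g₂ * (g₀ ^ b)⁻¹, h2⟩ * T ^ b)
      = η ⟨g₁ * (g₀ ^ a)⁻¹, h1⟩ * (T ^ a * η ⟨g₂ * (g₀ ^ b)⁻¹, h2⟩) * T ^ b := by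
        simp only [mul_assoc]
    _ = η ⟨g₁ * (g₀ ^ a)⁻¹, h1⟩
          * (η ⟨g₀ ^ a * (g₂ * (g₀ ^ b)⁻¹) * (g₀ ^ a)⁻¹, aux_conj_pow_mem g₀ hconj a ⟨g₂ * (g₀ ^ b)⁻¹, h2⟩⟩ * T ^ a)
          * T ^ b := by rw [h3]
    _ = η (⟨g₁ * (g₀ ^ a)⁻¹, h1⟩
          * ⟨g₀ ^ a * (g₂ * (g₀ ^ b)⁻¹) * (g₀ ^ a)⁻¹, aux_conj_pow_mem g₀ hconj a ⟨g₂ * (g₀ ^ b)⁻¹, h2⟩⟩)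
          * (T ^ a * T ^ b) := by
        rw [map_mul]; simp only [mul_assoc]
    _ = η ⟨g₁ * g₂ * (g₀ ^ (a + b))⁻¹, h12⟩ * T ^ (a + b) := by
        rw [← pow_add]
        congr 2
        ext
        show g₁ * (g₀ ^ a)⁻¹ * (g₀ ^ a * (g₂ * (g₀ ^ b)⁻¹) * (g₀ ^ a)⁻¹)
            = g₁ * g₂ * (g₀ ^ (a + b))⁻¹
        rw [pow_add]; group

def extRep (η : Representation F H V) (g₀ : G) (T : Module.End F V)
    (p : ℕ) (k : G → ℕ) (c : F)
    (hmem : ∀ g : G, g * (g₀ ^ k g)⁻¹ ∈ H)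
    (hzmem : g₀ ^ p ∈ H)
    (hconj : ∀ h : H, g₀ * ↑h * g₀⁻¹ ∈ H)
    (hR1 : ∀ h : H, T * η h = η ⟨g₀ * ↑h * g₀⁻¹, hconj h⟩ * T)
    (hT : T ^ p = η ⟨g₀ ^ p, hzmem⟩) (hc : c ^ p = 1)
    (hkadd : ∀ g₁ g₂ : G, k (g₁ * g₂) ≡ k g₁ + k g₂ [MOD p])
    (hk1 : k 1 ≡ 0 [MOD p]) : Representation F G V where
  toFun g := c ^ k g • (η ⟨g * (g₀ ^ k g)⁻¹, hmem g⟩ * T ^ k g)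
  map_one' := by
    have h0 : (1 : G) * (g₀ ^ 0)⁻¹ ∈ H := by simpa using H.one_mem
    show c ^ k 1 • (η ⟨1 * (g₀ ^ k 1)⁻¹, hmem 1⟩ * T ^ k 1) = 1
    rw [aux_val_indep η g₀ T p c hzmem hT hc 1 (k 1) 0 hk1 (hmem 1) h0]
    have he : (⟨(1 : G) * (g₀ ^ 0)⁻¹, h0⟩ : H) = 1 := by ext; simp
    rw [he]
    simp
  map_mul' g₁ g₂ := by
    have hmem12 : (g₁ * g₂) * (g₀ ^ (k g₁ + k g₂))⁻¹ ∈ H := by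
      have heq : (g₁ * g₂) * (g₀ ^ (k g₁ + k g₂))⁻¹
          = (g₁ * (g₀ ^ k g₁)⁻¹) * (g₀ ^ k g₁ * (g₂ * (g₀ ^ k g₂)⁻¹) * (g₀ ^ k g₁)⁻¹) := by
        rw [pow_add]; group
      rw [heq]
      exact H.mul_mem (hmem g₁) (aux_conj_pow_mem g₀ hconj (k g₁) ⟨_, hmem g₂⟩)
    show c ^ k (g₁ * g₂) • (η ⟨g₁ * g₂ * (g₀ ^ k (g₁ * g₂))⁻¹, hmem _⟩ * T ^ k (g₁ * g₂))
        = (c ^ k g₁ • (η ⟨g₁ * (g₀ ^ k g₁)⁻¹, hmem g₁⟩ * T ^ k g₁))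
          * (c ^ k g₂ • (η ⟨g₂ * (g₀ ^ k g₂)⁻¹, hmem g₂⟩ * T ^ k g₂))
    rw [aux_val_indep η g₀ T p c hzmem hT hc (g₁ * g₂) (k (g₁ * g₂)) (k g₁ + k g₂)
      (hkadd g₁ g₂) (hmem _) hmem12]
    rw [smul_mul_assoc, mul_smul_comm, smul_smul, ← pow_add]
    rw [aux_val_mul η g₀ T hconj hR1 g₁ g₂ (k g₁) (k g₂) (hmem g₁) (hmem g₂) hmem12]

lemma extRep_apply (η : Representation F H V) (g₀ : G) (T : Module.End F V)
    (p : ℕ) (k : G → ℕ) (c : F)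
    (hmem : ∀ g : G, g * (g₀ ^ k g)⁻¹ ∈ H)
    (hzmem : g₀ ^ p ∈ H)
    (hconj : ∀ h : H, g₀ * ↑h * g₀⁻¹ ∈ H)
    (hR1 : ∀ h : H, T * η h = η ⟨g₀ * ↑h * g₀⁻¹, hconj h⟩ * T)
    (hT : T ^ p = η ⟨g₀ ^ p, hzmem⟩) (hc : c ^ p = 1)
    (hkadd : ∀ g₁ g₂ : G, k (g₁ * g₂) ≡ k g₁ + k g₂ [MOD p])
    (hk1 : k 1 ≡ 0 [MOD p]) (g : G) :
    extRep η g₀ T p k c hmem hzmem hconj hR1 hT hc hkadd hk1 g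
      = c ^ k g • (η ⟨g * (g₀ ^ k g)⁻¹, hmem g⟩ * T ^ k g) := rfl

lemma extRep_coe_H (η : Representation F H V) (g₀ : G) (T : Module.End F V)
    (p : ℕ) (k : G → ℕ) (c : F)
    (hmem : ∀ g : G, g * (g₀ ^ k g)⁻¹ ∈ H)
    (hzmem : g₀ ^ p ∈ H)
    (hconj : ∀ h : H, g₀ * ↑h * g₀⁻¹ ∈ H)
    (hR1 : ∀ h : H, T * η h = η ⟨g₀ * ↑h * g₀⁻¹, hconj h⟩ * T)
    (hT : T ^ p = η ⟨g₀ ^ p, hzmem⟩) (hc : c ^ p = 1)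
    (hkadd : ∀ g₁ g₂ : G, k (g₁ * g₂) ≡ k g₁ + k g₂ [MOD p])
    (hk1 : k 1 ≡ 0 [MOD p]) (h : H) (hk0 : k ↑h ≡ 0 [MOD p]) :
    extRep η g₀ T p k c hmem hzmem hconj hR1 hT hc hkadd hk1 ↑h = η h := by
  have h0 : (↑h : G) * (g₀ ^ 0)⁻¹ ∈ H := by simpa using h.2
  rw [extRep_apply,
    aux_val_indep η g₀ T p c hzmem hT hc ↑h (k ↑h) 0 hk0 (hmem ↑h) h0]
  have he : (⟨(↑h : G) * (g₀ ^ 0)⁻¹, h0⟩ : H) = h := by ext; simp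
  rw [he]
  simp

lemma extRep_g₀ (η : Representation F H V) (g₀ : G) (T : Module.End F V)
    (p : ℕ) (k : G → ℕ) (c : F)
    (hmem : ∀ g : G, g * (g₀ ^ k g)⁻¹ ∈ H)
    (hzmem : g₀ ^ p ∈ H)
    (hconj : ∀ h : H, g₀ * ↑h * g₀⁻¹ ∈ H)
    (hR1 : ∀ h : H, T * η h = η ⟨g₀ * ↑h * g₀⁻¹, hconj h⟩ * T)
    (hT : T ^ p = η ⟨g₀ ^ p, hzmem⟩) (hc : c ^ p = 1)
    (hkadd : ∀ g₁ g₂ : G, k (g₁ * g₂) ≡ k g₁ + k g₂ [MOD p])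
    (hk1 : k 1 ≡ 0 [MOD p]) (hkg : k g₀ ≡ 1 [MOD p]) :
    extRep η g₀ T p k c hmem hzmem hconj hR1 hT hc hkadd hk1 g₀ = c • T := by
  have h0 : g₀ * (g₀ ^ 1)⁻¹ ∈ H := by simpa using H.one_mem
  rw [extRep_apply,
    aux_val_indep η g₀ T p c hzmem hT hc g₀ (k g₀) 1 hkg (hmem g₀) h0]
  have he : (⟨g₀ * (g₀ ^ 1)⁻¹, h0⟩ : H) = 1 := by ext; simp
  rw [he]
  simp

lemma aux_conj_end_pow {W : Type*} [AddCommGroup W] [Module F W]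
    (e : V ≃ₗ[F] W) (A : Module.End F W) (n : ℕ) (v : V) :
    ((e.symm.toLinearMap ∘ₗ A ∘ₗ e.toLinearMap) ^ n) v = e.symm ((A ^ n) (e v)) := by
  induction n with
  | zero => simp
  | succ n ih =>
    rw [pow_succ', pow_succ', Module.End.mul_apply, ih]
    simp [Module.End.mul_apply]

end ExtAux

/-- If the `G/H`-orbit of the irreducible representation `η` of the normal
subgroup `H` of prime index `p` is a singleton, then `η` extends to `G`, and there are exactly
`p` pairwise inequivalent irreducible representations of `G` restricting to `η`. -/
theorem stmt_0 {F : Type*} [Field F] [IsAlgClosed F] {G : Type*} [Group G] [Fintype G]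
    (hchar : CharZero F ∨ Nat.Coprime (ringChar F) (Fintype.card G))
    (p : ℕ) (hp : p.Prime) (H : Subgroup G) [hH : H.Normal] (hidx : H.index = p)
    {V : Type*} [AddCommGroup V] [Module F V]
    (η : Representation F H V) (hirr : RepIrred η)
    (horbit : ∀ g : G, RepIso (ConjRep hH g η) η) :
    ∃ ρ : Fin p → Representation F G V,
      (∀ i, RepIrred (ρ i)) ∧
      (∀ i, RepIso η ((ρ i).comp H.subtype)) ∧
      (∀ i j, i ≠ j → ¬ RepIso (ρ i) (ρ j)) ∧
      (∀ {W : Type*} [AddCommGroup W] [Module F W] (ρ' : Representation F G W),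
        RepIrred ρ' → RepIso η (ρ'.comp H.subtype) → ∃ i, RepIso (ρ i) ρ') := by
  classical
  have hnt : Nontrivial V := hirr.1
  have hp1 : 1 < p := hp.one_lt
  have hpne : p ≠ 0 := hp.ne_zero
  -- choose g₀ ∉ H
  have hHne : H ≠ ⊤ := by
    intro h
    rw [h, Subgroup.index_top] at hidx
    omega
  obtain ⟨g₀, hg₀⟩ : ∃ g, g ∉ H := by
    by_contra h
    push_neg at h
    exact hHne ((Subgroup.eq_top_iff' H).mpr h)
  set q : G →* G ⧸ H := QuotientGroup.mk' H with hq
  have hcards : Nat.card (G ⧸ H) = p := by rw [← Subgroup.index_eq_card]; exact hidx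
  have hfinq : Finite (G ⧸ H) := Nat.finite_of_card_ne_zero (by omega)
  have hqg₀ : q g₀ ≠ 1 := by
    intro h
    exact hg₀ ((QuotientGroup.eq_one_iff g₀).mp h)
  have horder : orderOf (q g₀) = p := by
    have hdvd : orderOf (q g₀) ∣ p := hcards ▸ orderOf_dvd_natCard (q g₀)
    rcases (Nat.Prime.eq_one_or_self_of_dvd hp _ hdvd) with h | h
    · exact absurd (orderOf_eq_one_iff.mp h) hqg₀
    · exact h
  have hgen : ∀ x : G ⧸ H, ∃ n : ℕ, (q g₀) ^ n = x := by
    intro x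
    have htop : Subgroup.zpowers (q g₀) = ⊤ := by
      apply Subgroup.eq_top_of_card_eq
      rw [Nat.card_zpowers, horder, hcards]
    have hx : x ∈ Submonoid.powers (q g₀) :=
      mem_powers_iff_mem_zpowers.mpr (htop ▸ Subgroup.mem_top x)
    obtain ⟨n, hn⟩ := hx
    exact ⟨n, hn⟩
  choose k hk using fun g => hgen (q g)
  have hmodeq : ∀ (g : G) (n : ℕ), (q g₀) ^ n = q g → n ≡ k g [MOD p] := by
    intro g n hn
    have h1 : (q g₀) ^ n = (q g₀) ^ (k g) := by rw [hn, hk]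
    exact horder ▸ pow_eq_pow_iff_modEq.mp h1
  have hmem : ∀ g : G, g * (g₀ ^ k g)⁻¹ ∈ H := by
    intro g
    have h1 : q (g * (g₀ ^ k g)⁻¹) = 1 := by
      rw [map_mul, map_inv, map_pow, hk, mul_inv_cancel]
    exact (QuotientGroup.eq_one_iff _).mp h1
  have hzmem : g₀ ^ p ∈ H := by
    have h1 : q (g₀ ^ p) = 1 := by rw [map_pow, ← horder, pow_orderOf_eq_one]
    exact (QuotientGroup.eq_one_iff _).mp h1
  have hconj : ∀ h : H, g₀ * ↑h * g₀⁻¹ ∈ H := fun h => hH.conj_mem _ h.2 g₀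
  have hkadd : ∀ g₁ g₂ : G, k (g₁ * g₂) ≡ k g₁ + k g₂ [MOD p] := by
    intro g₁ g₂
    exact (hmodeq _ _ (by rw [pow_add, hk, hk, map_mul])).symm
  have hk1 : k 1 ≡ 0 [MOD p] := (hmodeq 1 0 (by simp)).symm
  have hkH : ∀ h : H, k ↑h ≡ 0 [MOD p] := by
    intro h
    exact (hmodeq _ 0 (by rw [pow_zero]; exact ((QuotientGroup.eq_one_iff _).mpr h.2).symm)).symm
  have hkg₀ : k g₀ ≡ 1 [MOD p] := (hmodeq g₀ 1 (pow_one _)).symm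
  -- construct T
  obtain ⟨e₀, he₀⟩ := horbit g₀
  have he₀' : ∀ (h : H) (v : V),
      e₀.symm (η h v) = η ⟨g₀ * ↑h * g₀⁻¹, hconj h⟩ (e₀.symm v) := by
    intro h v
    have h2 := he₀ h (e₀.symm v)
    rw [LinearEquiv.apply_symm_apply] at h2
    apply e₀.injective
    rw [LinearEquiv.apply_symm_apply, ← h2]
    rfl
  set A : Module.End F V := e₀.symm.toLinearMap with hA
  set B : Module.End F V := e₀.toLinearMap with hB
  have hAη : ∀ h : H, A * η h = η ⟨g₀ * ↑h * g₀⁻¹, hconj h⟩ * A := by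
    intro h
    ext v
    simpa [Module.End.mul_apply, hA] using he₀' h v
  have hAB : A * B = 1 := by
    ext v; simp [hA, hB, Module.End.mul_apply]
  have hBA : B * A = 1 := by
    ext v; simp [hA, hB, Module.End.mul_apply]
  set z : H := ⟨g₀ ^ p, hzmem⟩ with hz
  have hApn := aux_T_pow_comm η g₀ A hconj hAη p
  have hfcomm : ∀ h : H, (η z⁻¹ * A ^ p) * η h = η h * (η z⁻¹ * A ^ p) := by
    intro h
    rw [mul_assoc, hApn h, ← mul_assoc, ← map_mul]
    have he : z⁻¹ * (⟨g₀ ^ p * ↑h * (g₀ ^ p)⁻¹, aux_conj_pow_mem g₀ hconj p h⟩ : H)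
        = h * z⁻¹ := by
      ext
      show (g₀ ^ p)⁻¹ * (g₀ ^ p * ↑h * (g₀ ^ p)⁻¹) = ↑h * (g₀ ^ p)⁻¹
      group
    rw [he, map_mul, mul_assoc]
  obtain ⟨μ, hμ⟩ := aux_schur η hirr (η z⁻¹ * A ^ p) hfcomm
  have hABp : (A ^ p) * (B ^ p) = 1 := aux_pow_mul_pow hAB p
  have hfinv : (η z⁻¹ * A ^ p) * (B ^ p * η z) = 1 := by
    rw [mul_assoc, ← mul_assoc (A ^ p), hABp, one_mul, ← map_mul, inv_mul_cancel, map_one]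
  have hμ0 : μ ≠ 0 := by
    intro h0
    rw [hμ, h0, zero_smul, zero_mul] at hfinv
    obtain ⟨v, hv⟩ := exists_ne (0 : V)
    have h1 := congrArg (fun T : Module.End F V => T v) hfinv
    simp at h1
    exact hv h1.symm
  have hAp : A ^ p = μ • η z := by
    have h1 : η z * (η z⁻¹ * A ^ p) = A ^ p := by
      rw [← mul_assoc, ← map_mul, mul_inv_cancel, map_one, one_mul]
    rw [← h1, hμ, mul_smul_comm, mul_one]
  obtain ⟨ν, hν⟩ := IsAlgClosed.exists_pow_nat_eq μ⁻¹ (show 0 < p by omega)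
  have hν0 : ν ≠ 0 := by
    intro h0
    rw [h0, zero_pow hpne] at hν
    exact hμ0 (by simpa using congrArg Inv.inv hν.symm)
  set T : Module.End F V := ν • A with hTdef
  set Ti : Module.End F V := ν⁻¹ • B with hTidef
  have hTTi : T * Ti = 1 := by
    rw [hTdef, hTidef, smul_mul_assoc, mul_smul_comm, smul_smul,
      mul_inv_cancel₀ hν0, one_smul, hAB]
  have hTiT : Ti * T = 1 := by
    rw [hTdef, hTidef, smul_mul_assoc, mul_smul_comm, smul_smul,
      inv_mul_cancel₀ hν0, one_smul, hBA]
  have hTη : ∀ h : H, T * η h = η ⟨g₀ * ↑h * g₀⁻¹, hconj h⟩ * T := by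
    intro h
    rw [hTdef, smul_mul_assoc, hAη h, mul_smul_comm]
  have hTp : T ^ p = η z := by
    rw [hTdef, smul_pow, hν, hAp, smul_smul, inv_mul_cancel₀ hμ0, one_smul]
  have hTinj : Function.Injective T := by
    intro v w hvw
    have h1 : Ti (T v) = Ti (T w) := by rw [hvw]
    rw [← Module.End.mul_apply, ← Module.End.mul_apply, hTiT] at h1
    simpa using h1
  clear_value T Ti
  -- primitive root
  have hpd : p ∣ Fintype.card G := by
    rw [← Nat.card_eq_fintype_card, ← hidx]
    exact H.index_dvd_card
  have hpF : (p : F) ≠ 0 := by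
    rcases hchar with h | h
    · exact Nat.cast_ne_zero.mpr hpne
    · intro h0
      have hchp : ringChar F ∣ p := ringChar.dvd h0
      rcases (Nat.Prime.eq_one_or_self_of_dvd hp _ hchp) with h1 | h1
      · exact CharP.ringChar_ne_one h1
      · rw [← Nat.card_eq_fintype_card] at h
        have : p = 1 := Nat.eq_one_of_dvd_one ((h1 ▸ h : Nat.Coprime p _) ▸
          Nat.dvd_gcd dvd_rfl (by rw [Nat.card_eq_fintype_card]; exact hpd))
        omega
  have : NeZero (p : F) := ⟨hpF⟩
  have : NeZero p := ⟨hpne⟩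
  obtain ⟨ζ, hζ⟩ := HasEnoughRootsOfUnity.exists_primitiveRoot F p
  have hζp : ζ ^ p = 1 := hζ.pow_eq_one
  have hcpow : ∀ n : ℕ, (ζ ^ n) ^ p = 1 := fun n => by
    rw [← pow_mul, mul_comm, pow_mul, hζp, one_pow]
  -- the representations
  set ρ : Fin p → Representation F G V := fun i =>
    extRep η g₀ T p k (ζ ^ (i : ℕ)) hmem hzmem hconj hTη hTp (hcpow i) hkadd hk1 with hρdef
  have hρH : ∀ (i : Fin p) (h : H), ρ i ↑h = η h := fun i h =>
    extRep_coe_H η g₀ T p k (ζ ^ (i : ℕ)) hmem hzmem hconj hTη hTp (hcpow i) hkadd hk1 h (hkH h)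
  have hρg₀ : ∀ i : Fin p, ρ i g₀ = (ζ ^ (i : ℕ)) • T := fun i =>
    extRep_g₀ η g₀ T p k (ζ ^ (i : ℕ)) hmem hzmem hconj hTη hTp (hcpow i) hkadd hk1 hkg₀
  refine ⟨ρ, ?_, ?_, ?_, ?_⟩
  · -- irreducibility
    intro i
    refine ⟨hnt, fun U hU => hirr.2 U fun h v hv => ?_⟩
    have h1 := hU ↑h v hv
    rwa [hρH i h] at h1
  · -- restriction is η
    intro i
    refine ⟨LinearEquiv.refl F V, fun h v => ?_⟩
    show η h v = ρ i ((H.subtype) h) (LinearEquiv.refl F V v)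
    rw [show (H.subtype) h = (↑h : G) from rfl, hρH i h]
    rfl
  · -- pairwise inequivalent
    rintro i j hne ⟨e, he⟩
    have hcomm : ∀ h : H, e.toLinearMap * η h = η h * e.toLinearMap := by
      intro h
      ext v
      have h1 := he ↑h v
      rw [hρH i h, hρH j h] at h1
      simpa [Module.End.mul_apply] using h1
    obtain ⟨d, hd⟩ := aux_schur η hirr e.toLinearMap hcomm
    have hev : ∀ w : V, e w = d • w := by
      intro w
      have : e.toLinearMap w = (d • (1 : Module.End F V)) w := by rw [hd]
      simpa using this
    have hd0 : d ≠ 0 := by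
      intro h0
      obtain ⟨v, hv⟩ := exists_ne (0 : V)
      have h1 : e v = e 0 := by rw [hev, h0, zero_smul, map_zero]
      exact hv (e.injective h1)
    obtain ⟨v, hv⟩ := exists_ne (0 : V)
    have h1 : (d * ζ ^ (i : ℕ)) • T v = (d * ζ ^ (j : ℕ)) • T v := by
      have h0 := he g₀ v
      rw [hρg₀ i, hρg₀ j] at h0
      calc (d * ζ ^ (i : ℕ)) • T v = d • (ζ ^ (i : ℕ) • T v) := by rw [smul_smul]
        _ = e ((ζ ^ (i : ℕ) • T) v) := by rw [LinearMap.smul_apply, hev]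
        _ = (ζ ^ (j : ℕ) • T) (e v) := h0
        _ = ζ ^ (j : ℕ) • (T (e v)) := by rw [LinearMap.smul_apply]
        _ = ζ ^ (j : ℕ) • (T (d • v)) := by rw [hev]
        _ = (d * ζ ^ (j : ℕ)) • T v := by rw [map_smul, smul_smul, mul_comm d]
    have hTv : T v ≠ 0 := by
      intro h0
      exact hv (hTinj (by rw [h0, map_zero]))
    have h2 : d * ζ ^ (i : ℕ) = d * ζ ^ (j : ℕ) := by
      by_contra hcon
      have h3 : (d * ζ ^ (i : ℕ) - d * ζ ^ (j : ℕ)) • T v = 0 := by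
        rw [sub_smul, h1, sub_self]
      rcases smul_eq_zero.mp h3 with h4 | h4
      · exact hcon (by linear_combination h4)
      · exact hTv h4
    have h3 : ζ ^ (i : ℕ) = ζ ^ (j : ℕ) := mul_left_cancel₀ hd0 h2
    exact hne (Fin.ext (hζ.pow_inj i.2 j.2 h3))
  · -- exhaustiveness
    intro W _ _ ρ' hirr' hiso
    obtain ⟨e, he⟩ := hiso
    have he' : ∀ (h : H) (v : V), e (η h v) = ρ' ↑h (e v) := he
    have hesymm : ∀ (h : H) (w : W), e.symm (ρ' ↑h w) = η h (e.symm w) := by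
      intro h w
      apply e.injective
      rw [he', LinearEquiv.apply_symm_apply, LinearEquiv.apply_symm_apply]
    set S : Module.End F V := e.symm.toLinearMap ∘ₗ (ρ' g₀) ∘ₗ e.toLinearMap with hSdef
    set Si : Module.End F V := e.symm.toLinearMap ∘ₗ (ρ' g₀⁻¹) ∘ₗ e.toLinearMap with hSidef
    have hSpow : ∀ (n : ℕ) (v : V), (S ^ n) v = e.symm ((ρ' (g₀ ^ n)) (e v)) := by
      intro n v
      rw [hSdef, aux_conj_end_pow, map_pow]
    have hSSi : S * Si = 1 := by
      ext v
      simp only [Module.End.mul_apply, hSdef, hSidef, LinearMap.coe_comp, Function.comp_apply,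
        LinearEquiv.coe_coe, LinearEquiv.apply_symm_apply, Module.End.one_apply]
      rw [← Module.End.mul_apply (ρ' g₀) (ρ' g₀⁻¹), ← map_mul, mul_inv_cancel, map_one]
      simp
    have hSiS : Si * S = 1 := by
      ext v
      simp only [Module.End.mul_apply, hSdef, hSidef, LinearMap.coe_comp, Function.comp_apply,
        LinearEquiv.coe_coe, LinearEquiv.apply_symm_apply, Module.End.one_apply]
      rw [← Module.End.mul_apply (ρ' g₀⁻¹) (ρ' g₀), ← map_mul, inv_mul_cancel, map_one]
      simp
    have hconj' : ∀ h : H, g₀⁻¹ * ↑h * g₀ ∈ H := by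
      intro h
      have := hH.conj_mem _ h.2 g₀⁻¹
      rwa [inv_inv] at this
    have hSiη : ∀ h : H, Si * η h = η ⟨g₀⁻¹ * ↑h * g₀, hconj' h⟩ * Si := by
      intro h
      ext v
      simp only [Module.End.mul_apply, hSidef, LinearMap.coe_comp, Function.comp_apply,
        LinearEquiv.coe_coe]
      rw [he' h v, ← Module.End.mul_apply (ρ' g₀⁻¹) (ρ' ↑h), ← map_mul]
      rw [show ρ' (g₀⁻¹ * ↑h) = ρ' ↑(⟨g₀⁻¹ * ↑h * g₀, hconj' h⟩ : H) * ρ' g₀⁻¹ from by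
        rw [← map_mul]
        congr 1
        show g₀⁻¹ * (↑h : G) = (g₀⁻¹ * ↑h * g₀) * g₀⁻¹
        group]
      rw [Module.End.mul_apply, hesymm]
    have hDcomm : ∀ h : H, (Si * T) * η h = η h * (Si * T) := by
      intro h
      rw [mul_assoc, hTη h, ← mul_assoc, hSiη ⟨g₀ * ↑h * g₀⁻¹, hconj h⟩, mul_assoc]
      have hel : (⟨g₀⁻¹ * ↑(⟨g₀ * ↑h * g₀⁻¹, hconj h⟩ : H) * g₀, hconj' _⟩ : H) = h := by
        ext
        show g₀⁻¹ * (g₀ * ↑h * g₀⁻¹) * g₀ = ↑h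
        group
      rw [hel]
    obtain ⟨d, hd⟩ := aux_schur η hirr (Si * T) hDcomm
    have hSiTinv : (Si * T) * (Ti * S) = 1 := by
      rw [mul_assoc, ← mul_assoc T, hTTi, one_mul, hSiS]
    have hd0 : d ≠ 0 := by
      intro h0
      rw [hd, h0, zero_smul, zero_mul] at hSiTinv
      obtain ⟨v, hv⟩ := exists_ne (0 : V)
      have h1 := congrArg (fun X : Module.End F V => X v) hSiTinv
      simp at h1
      exact hv h1.symm
    have hTdS : T = d • S := by
      calc T = (S * Si) * T := by rw [hSSi, one_mul]
        _ = S * (Si * T) := mul_assoc _ _ _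
        _ = S * (d • 1) := by rw [hd]
        _ = d • S := by rw [mul_smul_comm, mul_one]
    have hSp : S ^ p = η z := by
      ext v
      rw [hSpow p v]
      rw [show g₀ ^ p = ((z : H) : G) from rfl, hesymm z (e v), LinearEquiv.symm_apply_apply]
    have hdp : d ^ p = 1 := by
      have h1 : d ^ p • η z = η z := by
        calc d ^ p • η z = d ^ p • S ^ p := by rw [hSp]
          _ = (d • S) ^ p := (smul_pow d S p).symm
          _ = T ^ p := by rw [← hTdS]
          _ = η z := hTp
      obtain ⟨v, hv⟩ := exists_ne (0 : V)
      have hzv : η z v ≠ 0 := by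
        intro h0
        have h2 : η z⁻¹ (η z v) = 0 := by rw [h0, map_zero]
        rw [← Module.End.mul_apply, ← map_mul, inv_mul_cancel, map_one] at h2
        exact hv (by simpa using h2)
      have h2 : d ^ p • η z v = η z v := by
        have h3 := congrArg (fun X : Module.End F V => X v) h1
        simpa using h3
      by_contra hcon
      have h3 : (d ^ p - 1) • η z v = 0 := by
        rw [sub_smul, one_smul, h2, sub_self]
      rcases smul_eq_zero.mp h3 with h4 | h4
      · exact hcon (by linear_combination h4)
      · exact hzv h4
    have hdinv : d⁻¹ ^ p = 1 := by rw [inv_pow, hdp, inv_one]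
    obtain ⟨i₀, hi₀p, hi₀⟩ := hζ.eq_pow_of_pow_eq_one hdinv
    refine ⟨⟨i₀, hi₀p⟩, e, fun g v => ?_⟩
    have hTn : ∀ (n : ℕ) (w : V), e ((T ^ n) w) = d ^ n • (ρ' (g₀ ^ n)) (e w) := by
      intro n w
      rw [hTdS, smul_pow, LinearMap.smul_apply, map_smul, hSpow n w,
        LinearEquiv.apply_symm_apply]
    have hval : (ρ ⟨i₀, hi₀p⟩) g
        = (ζ ^ i₀) ^ (k g) • (η ⟨g * (g₀ ^ k g)⁻¹, hmem g⟩ * T ^ (k g)) := rfl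
    have hgdec : (↑(⟨g * (g₀ ^ k g)⁻¹, hmem g⟩ : H) : G) * g₀ ^ (k g) = g := by
      show g * (g₀ ^ k g)⁻¹ * g₀ ^ (k g) = g
      group
    calc e ((ρ ⟨i₀, hi₀p⟩ g) v)
        = (ζ ^ i₀) ^ (k g) • e (η ⟨g * (g₀ ^ k g)⁻¹, hmem g⟩ ((T ^ k g) v)) := by
          rw [hval, LinearMap.smul_apply, map_smul, Module.End.mul_apply]
      _ = (ζ ^ i₀) ^ (k g) • ρ' ↑(⟨g * (g₀ ^ k g)⁻¹, hmem g⟩ : H) (e ((T ^ k g) v)) := by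
          rw [he']
      _ = (ζ ^ i₀) ^ (k g) • ρ' ↑(⟨g * (g₀ ^ k g)⁻¹, hmem g⟩ : H)
            (d ^ (k g) • ρ' (g₀ ^ k g) (e v)) := by rw [hTn]
      _ = ((ζ ^ i₀) ^ (k g) * d ^ (k g))
            • (ρ' ↑(⟨g * (g₀ ^ k g)⁻¹, hmem g⟩ : H) * ρ' (g₀ ^ (k g))) (e v) := by
          rw [map_smul, smul_smul, Module.End.mul_apply]
      _ = ρ' g (e v) := by
          rw [← map_mul, hgdec, ← mul_pow, hi₀, inv_mul_cancel₀ hd0, one_pow, one_smul]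
end

section
/- Let G be a finite group, H a normal subgroup of prime index p, and F an algebraically closed field of characteristic 0 or coprime to |G|. Let η be an irreducible F-representation of H whose G/H-orbit under conjugation consists of p distinct points η = η_1, η_2, …, η_p. Then the induced representations η_1↑_H^G, η_2↑_H^G, …, η_p↑_H^G are all equivalent to a common representation ρ of G, and ρ is irreducible. -/
open scoped TensorProduct

/-!
This is Mackey's irreducibility criterion for a normal subgroup. Restricted to `H`, a model
`ρ` of `η↑` is the direct sum over the cosets `c` of the summands `ρ(c.out) ι(V) ≅ η^(c.out⁻¹)`.
Since the orbit of `η` has `p = [G : H]` points, these summands are pairwise non-isomorphic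
irreducible `H`-representations. Take a nonzero vector of a nonzero `G`-invariant subspace `U`
whose support is minimal: every coordinate projection in the support is then injective on the
vectors of `U` supported there, so two such coordinates would make two different summands
isomorphic. Hence `U` contains a summand, and its `G`-translates, i.e. everything.

For the uniqueness, a model of `η^x↑` is also a model of `η↑`, and two models of `η↑` are
isomorphic summand by summand.
-/

open DirectSum

theorem Representation.apply_injective {k G W : Type*} [Semiring k] [Group G]
    [AddCommMonoid W] [Module k W] (ρ : Representation k G W) (g : G) :
    Function.Injective (ρ g) :=
  Function.LeftInverse.injective (g := ρ g⁻¹) (ρ.inv_self_apply g)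

section RepIso

variable {k A : Type*} [Field k] [Monoid A] {V W X : Type*} [AddCommGroup V] [Module k V]
  [AddCommGroup W] [Module k W] [AddCommGroup X] [Module k X]

theorem RepIso.symm {σ : Representation k A V} {τ : Representation k A W} (h : RepIso σ τ) :
    RepIso τ σ := by
  obtain ⟨e, he⟩ := h
  exact ⟨e.symm, fun a w => e.injective (by simp [he])⟩

theorem RepIso.trans {σ : Representation k A V} {τ : Representation k A W}
    {υ : Representation k A X} (h : RepIso σ τ) (h' : RepIso τ υ) : RepIso σ υ := by
  obtain ⟨e, he⟩ := h
  obtain ⟨e', he'⟩ := h'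
  exact ⟨e.trans e', fun a v => by simp [he, he']⟩

theorem RepIso.of_range_eq {σ : Representation k A V} {τ : Representation k A W}
    {υ : Representation k A X} {f : V →ₗ[k] X} {f' : W →ₗ[k] X}
    (hf : Function.Injective f) (hf' : Function.Injective f')
    (hσ : ∀ a v, f (σ a v) = υ a (f v)) (hτ : ∀ a w, f' (τ a w) = υ a (f' w))
    (hrange : LinearMap.range f = LinearMap.range f') : RepIso σ τ := by
  let e : V ≃ₗ[k] W := (LinearEquiv.ofInjective f hf).trans
    ((LinearEquiv.ofEq _ _ hrange).trans (LinearEquiv.ofInjective f' hf').symm)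
  have he : ∀ v, f' (e v) = f v := fun v => by
    simp [e]
  exact ⟨e, fun a v => hf' (by rw [he, hτ, he, hσ])⟩

end RepIso

theorem RepIrred.comp_of_surjective {k A B : Type*} [Field k] [Monoid A] [Monoid B]
    {V : Type*} [AddCommGroup V] [Module k V] {σ : Representation k B V} (hσ : RepIrred σ)
    {φ : A →* B} (hφ : Function.Surjective φ) : RepIrred (σ.comp φ) := by
  refine ⟨hσ.1, fun U hU => hσ.2 U fun b v hv => ?_⟩
  obtain ⟨a, rfl⟩ := hφ b
  exact hU a v hv

theorem RepIrred.eq_bot_or_eq_range {k A : Type*} [Field k] [Monoid A] {V W : Type*}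
    [AddCommGroup V] [Module k V] [AddCommGroup W] [Module k W] {σ : Representation k A V}
    (hσ : RepIrred σ) {τ : Representation k A W} {f : V →ₗ[k] W}
    (hf : ∀ a v, f (σ a v) = τ a (f v)) {N : Submodule k W} (hN : N ≤ LinearMap.range f)
    (hNτ : ∀ a, ∀ w ∈ N, τ a w ∈ N) : N = ⊥ ∨ N = LinearMap.range f := by
  have hcomap : ∀ a, ∀ v ∈ N.comap f, σ a v ∈ N.comap f := fun a v hv => by
    simpa [hf] using hNτ a _ hv
  rw [← Submodule.map_comap_eq_of_le hN]
  rcases hσ.2 _ hcomap with h | h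
  · exact .inl (by rw [h, Submodule.map_bot])
  · exact .inr (by rw [h, Submodule.map_top])

section ConjRep

variable {k : Type*} [Field k] {G : Type*} [Group G] {H : Subgroup G} (hH : H.Normal)
  {V : Type*} [AddCommGroup V] [Module k V]

theorem conjHom_apply_coe (x : G) (h : H) : (conjHom hH x h : G) = x * h * x⁻¹ := rfl

theorem conjHom_surjective (x : G) : Function.Surjective (conjHom hH x) := fun h =>
  ⟨conjHom hH x⁻¹ h, Subtype.ext (by simp [conjHom_apply_coe, mul_assoc])⟩

theorem conjRep_apply (x : G) (η : Representation k H V) (h : H) :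
    ConjRep hH x η h = η (conjHom hH x h) := rfl

theorem conjRep_conjRep (x y : G) (η : Representation k H V) :
    ConjRep hH x (ConjRep hH y η) = ConjRep hH (y * x) η :=
  MonoidHom.ext fun h => congrArg η (Subtype.ext (by simp [conjHom_apply_coe, mul_assoc]))

theorem conjRep_one (η : Representation k H V) : ConjRep hH 1 η = η :=
  MonoidHom.ext fun h => congrArg η (Subtype.ext (by simp [conjHom_apply_coe]))

theorem RepIrred.conjRep {η : Representation k H V} (hη : RepIrred η) (x : G) :
    RepIrred (ConjRep hH x η) :=
  hη.comp_of_surjective (conjHom_surjective hH x)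

theorem RepIso.conjRep {V' : Type*} [AddCommGroup V'] [Module k V'] {η : Representation k H V}
    {η' : Representation k H V'} (h : RepIso η η') (x : G) :
    RepIso (ConjRep hH x η) (ConjRep hH x η') := by
  obtain ⟨e, he⟩ := h
  exact ⟨e, fun h v => he _ v⟩

theorem repIso_conjRep_of_mem (η : Representation k H V) {x : G} (hx : x ∈ H) :
    RepIso (ConjRep hH x η) η := by
  have hinv : ∀ a b : H, a * b = 1 → (η a).comp (η b) = LinearMap.id := fun a b hab => by
    rw [← Module.End.mul_eq_comp, ← map_mul, hab, map_one, Module.End.one_eq_id]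
  refine ⟨.ofLinearMap (η ⟨x, hx⟩⁻¹) (η ⟨x, hx⟩) (hinv _ _ (inv_mul_cancel _))
    (hinv _ _ (mul_inv_cancel _)), fun h v => ?_⟩
  simp only [LinearEquiv.coe_ofLinearMap, conjRep_apply, ← Module.End.mul_apply, ← map_mul]
  congr 2
  ext
  simp [conjHom_apply_coe, mul_assoc]

end ConjRep

section Decomposition

variable {k ι W : Type*} [Field k] [DecidableEq ι] [AddCommGroup W] [Module k W]
  (S : ι → Submodule k W) [Decomposition S]

namespace DirectSum

noncomputable def decomposeProj (i : ι) : W →ₗ[k] W :=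
  (S i).subtype ∘ₗ component k ι (fun i => S i) i ∘ₗ (decomposeLinearEquiv S).toLinearMap

variable {S}

theorem decomposeProj_apply (i : ι) (w : W) : decomposeProj S i w = decompose S w i := rfl

theorem decomposeProj_mem (i : ι) (w : W) : decomposeProj S i w ∈ S i :=
  (decompose S w i).2

theorem decomposeProj_comm {T : W →ₗ[k] W} (hT : ∀ i, ∀ w ∈ S i, T w ∈ S i) (i : ι) (w : W) :
    decomposeProj S i (T w) = T (decomposeProj S i w) := by
  simp only [decomposeProj_apply]
  induction w using DirectSum.Decomposition.inductionOn S with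
  | zero => simp
  | @homogeneous j m =>
    rcases eq_or_ne j i with rfl | hji
    · rw [decompose_of_mem_same S (hT j _ m.2), decompose_of_mem_same S m.2]
    · rw [decompose_of_mem_ne S (hT j _ m.2) hji, decompose_of_mem_ne S m.2 hji, map_zero]
  | add m m' hm hm' => simp [decompose_add, hm, hm']

theorem decomposeProj_eq_self {w : W} {i : ι} (h : ∀ j ≠ i, decomposeProj S j w = 0) :
    decomposeProj S i w = w := by
  have hw : decompose S w = of (fun i => S i) i (decompose S w i) := by
    refine DFinsupp.ext fun j => ?_
    rcases eq_or_ne j i with rfl | hji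
    · rw [of_eq_same]
    · rw [of_eq_of_ne _ _ _ hji, ← Submodule.coe_eq_zero, ← decomposeProj_apply, h j hji]
  conv_rhs => rw [← (decompose S).symm_apply_apply w, hw, decompose_symm_of]
  rfl

theorem eq_zero_of_decomposeProj_eq_zero {w : W} (h : ∀ i, decomposeProj S i w = 0) : w = 0 :=
  (decompose S).injective <| DFinsupp.ext fun i =>
    Subtype.ext (by simpa [decomposeProj_apply] using h i)

end DirectSum

end Decomposition

theorem RepIrred.map_eq_range {k A : Type*} [Field k] [Monoid A] {V W : Type*}
    [AddCommGroup V] [Module k V] [AddCommGroup W] [Module k W] {σ : Representation k A V}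
    (hσ : RepIrred σ) {τ : Representation k A W} {f : V →ₗ[k] W}
    (hf : ∀ a v, f (σ a v) = τ a (f v)) {π : W →ₗ[k] W} (hπ : ∀ w, π w ∈ LinearMap.range f)
    (hπτ : ∀ a w, π (τ a w) = τ a (π w)) {M : Submodule k W} (hM : ∀ a, ∀ m ∈ M, τ a m ∈ M)
    {u : W} (hu : u ∈ M) (hπu : π u ≠ 0) : M.map π = LinearMap.range f := by
  refine (hσ.eq_bot_or_eq_range hf ?_ ?_).resolve_left ?_
  · rintro - ⟨m, -, rfl⟩
    exact hπ m
  · rintro a - ⟨m, hm, rfl⟩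
    exact ⟨τ a m, hM a m hm, hπτ a m⟩
  · exact (Submodule.ne_bot_iff _).2 ⟨π u, ⟨u, hu, rfl⟩, hπu⟩

section MultiplicityFree

variable {k A ι V W : Type*} [Field k] [Monoid A] [DecidableEq ι]
  [AddCommGroup V] [Module k V] [AddCommGroup W] [Module k W]
  {τ : Representation k A W} {σ : ι → Representation k A V} {f : ι → V →ₗ[k] W}

theorem decomposeProj_range_comm [Decomposition fun i => LinearMap.range (f i)]
    (hfτ : ∀ i a v, f i (σ i a v) = τ a (f i v)) (i : ι) (a : A) (w : W) :
    decomposeProj (fun i => LinearMap.range (f i)) i (τ a w) =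
      τ a (decomposeProj (fun i => LinearMap.range (f i)) i w) := by
  refine decomposeProj_comm (T := τ a) ?_ i w
  rintro j - ⟨v, rfl⟩
  exact ⟨σ j a v, hfτ j a v⟩

theorem exists_range_le_of_injOn_decomposeProj
    [Decomposition fun i => LinearMap.range (f i)]
    (hf : ∀ i, Function.Injective (f i)) (hfτ : ∀ i a v, f i (σ i a v) = τ a (f i v))
    (hσ : ∀ i, RepIrred (σ i)) (hdist : Pairwise fun i j => ¬ RepIso (σ i) (σ j))
    {M : Submodule k W} (hM : ∀ a, ∀ m ∈ M, τ a m ∈ M) {u : W} (hu : u ∈ M) (hu0 : u ≠ 0)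
    {T : Finset ι} (hT : ∀ m ∈ M, ∀ i ∉ T, decomposeProj (fun i => LinearMap.range (f i)) i m = 0)
    (hinj : ∀ i ∈ T, ∀ m ∈ M, decomposeProj (fun i => LinearMap.range (f i)) i m = 0 → m = 0) :
    ∃ i, LinearMap.range (f i) ≤ M := by
  set π := decomposeProj fun i => LinearMap.range (f i)
  have hπτ : ∀ i a w, π i (τ a w) = τ a (π i w) := decomposeProj_range_comm hfτ
  have hmap : ∀ i ∈ T, M.map (π i) = LinearMap.range (f i) := fun i hi =>
    (hσ i).map_eq_range (hfτ i) (decomposeProj_mem (S := fun i => LinearMap.range (f i)) i)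
      (hπτ i) hM hu fun hui => hu0 (hinj i hi u hu hui)
  have hiso : ∀ i ∈ T, RepIso (σ i) (SubRep τ M hM) := fun i hi =>
    RepIso.of_range_eq (f' := π i ∘ₗ M.subtype) (hf i)
      (fun m m' h => Subtype.ext (sub_eq_zero.1 (hinj i hi _ (M.sub_mem m.2 m'.2)
        (by simpa [sub_eq_zero] using h))))
      (hfτ i) (fun a m => hπτ i a m)
      (by rw [LinearMap.range_comp, Submodule.range_subtype, hmap i hi])
  obtain ⟨i, hi⟩ : T.Nonempty := by
    rw [Finset.nonempty_iff_ne_empty]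
    rintro rfl
    exact hu0 (eq_zero_of_decomposeProj_eq_zero fun i => hT u hu i (Finset.notMem_empty i))
  have hTi : ∀ j ∈ T, j = i := fun j hj =>
    by_contra fun hji => hdist hji ((hiso j hj).trans (hiso i hi).symm)
  refine ⟨i, ?_⟩
  rw [← hmap i hi]
  rintro - ⟨m, hm, rfl⟩
  rwa [decomposeProj_eq_self fun j hji => hT m hm j fun hj => hji (hTi j hj)]

theorem exists_range_le_of_isInternal
    (hf : ∀ i, Function.Injective (f i)) (hfτ : ∀ i a v, f i (σ i a v) = τ a (f i v))
    (hσ : ∀ i, RepIrred (σ i)) (hdist : Pairwise fun i j => ¬ RepIso (σ i) (σ j))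
    (hint : IsInternal fun i => LinearMap.range (f i))
    {U : Submodule k W} (hU : ∀ a, ∀ w ∈ U, τ a w ∈ U) (hU0 : U ≠ ⊥) :
    ∃ i, LinearMap.range (f i) ≤ U := by
  classical
  let _ := hint.chooseDecomposition
  set π := decomposeProj fun i => LinearMap.range (f i)
  have hπτ : ∀ i a w, π i (τ a w) = τ a (π i w) := decomposeProj_range_comm hfτ
  -- a nonzero vector of `U` whose support `T` is minimal for inclusion
  obtain ⟨T, ⟨u, huU, hu0, huT⟩, hmin⟩ := wellFounded_lt.has_min
      {T : Finset ι | ∃ u ∈ U, u ≠ 0 ∧ ∀ i ∉ T, π i u = 0} (by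
    obtain ⟨u, huU, hu0⟩ := Submodule.exists_mem_ne_zero_of_ne_bot hU0
    exact ⟨(decompose _ u).support, u, huU, hu0, fun i hi => by
      rw [decomposeProj_apply, DFinsupp.notMem_support_iff.mp hi, ZeroMemClass.coe_zero]⟩)
  let M : Submodule k W := U ⊓ ⨅ (i) (_ : i ∉ T), LinearMap.ker (π i)
  have hM : ∀ m, m ∈ M ↔ m ∈ U ∧ ∀ i ∉ T, π i m = 0 := by
    simp [M]
  have hMτ : ∀ a, ∀ m ∈ M, τ a m ∈ M := fun a m hm => by
    rw [hM] at hm ⊢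
    exact ⟨hU a m hm.1, fun i hi => by rw [hπτ, hm.2 i hi, map_zero]⟩
  have hinj : ∀ i ∈ T, ∀ m ∈ M, π i m = 0 → m = 0 := by
    intro i hi m hm hmi
    by_contra hm0
    refine hmin (T.erase i) ⟨m, ((hM m).1 hm).1, hm0, fun j hj => ?_⟩ (Finset.erase_ssubset hi)
    rcases eq_or_ne j i with rfl | hji
    · exact hmi
    · exact ((hM m).1 hm).2 j fun hjT => hj (Finset.mem_erase.2 ⟨hji, hjT⟩)
  obtain ⟨i, hi⟩ := exists_range_le_of_injOn_decomposeProj hf hfτ hσ hdist hMτ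
    ((hM u).2 ⟨huU, huT⟩) hu0 (fun m hm => ((hM m).1 hm).2) hinj
  exact ⟨i, hi.trans inf_le_left⟩

end MultiplicityFree

section Induced

variable {k : Type*} [Field k] {G : Type*} [Group G] {H : Subgroup G}
  {V W : Type*} [AddCommGroup V] [Module k V] [AddCommGroup W] [Module k W]
  {σ : Representation k H V} {ρ : Representation k G W}

theorem IsInducedFrom.of_conjRep [hH : H.Normal] {x : G}
    (hind : IsInducedFrom H (ConjRep hH x σ) ρ) : IsInducedFrom H σ ρ := by
  obtain ⟨ι, hinj, hι, S, hS, hindep, hsup⟩ := hind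
  refine ⟨ρ x ∘ₗ ι, (ρ.apply_injective x).comp hinj, fun h v => ?_, fun c => S (c * x),
    fun g => ?_, hindep.comp (mul_left_injective _),
    by rwa [(mul_right_surjective (x : G ⧸ H)).iSup_comp S]⟩
  · have hσ : σ h = ConjRep hH x σ (conjHom hH x⁻¹ h) :=
      congrArg σ (Subtype.ext (by simp [conjHom_apply_coe, mul_assoc]))
    simp only [LinearMap.comp_apply, hσ, hι, conjHom_apply_coe, ← Module.End.mul_apply,
      ← map_mul]
    group
  · change S (g * x) = _
    rw [← QuotientGroup.mk_mul, hS, LinearMap.range_comp, ← Submodule.map_comp, map_mul,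
      Module.End.mul_eq_comp]

variable (H σ ρ) in
/-- The data of `IsInducedFrom`, with the summand over the coset `c` written as the image
of `ρ c.out ∘ ι`. -/
structure InducedModel where
  ι : V →ₗ[k] W
  injective : Function.Injective ι
  equivariant : ∀ (h : H) (v : V), ι (σ h v) = ρ h (ι v)
  iSupIndep : iSupIndep fun c : G ⧸ H => LinearMap.range (ρ c.out ∘ₗ ι)
  iSup_eq_top : ⨆ c : G ⧸ H, LinearMap.range (ρ c.out ∘ₗ ι) = ⊤

theorem IsInducedFrom.nonempty_inducedModel (hind : IsInducedFrom H σ ρ) :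
    Nonempty (InducedModel H σ ρ) := by
  obtain ⟨ι, hinj, hι, S, hS, hindep, hsup⟩ := hind
  have hS' : S = fun c : G ⧸ H => LinearMap.range (ρ c.out ∘ₗ ι) := funext fun c => by
    rw [LinearMap.range_comp, ← hS, QuotientGroup.out_eq']
  exact ⟨⟨ι, hinj, hι, hS' ▸ hindep, hS' ▸ hsup⟩⟩

theorem not_repIso_conjRep_out_inv [hH : H.Normal]
    (hstab : ∀ x ∉ H, ¬ RepIso (ConjRep hH x σ) σ) {c c' : G ⧸ H} (hcc' : c ≠ c') :
    ¬ RepIso (ConjRep hH c.out⁻¹ σ) (ConjRep hH c'.out⁻¹ σ) := by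
  intro hiso
  have h := hiso.conjRep hH c.out
  rw [conjRep_conjRep, conjRep_conjRep, inv_mul_cancel, conjRep_one] at h
  refine hstab _ (fun hmem => hcc' ?_) h.symm
  rw [← QuotientGroup.out_eq' c, ← QuotientGroup.out_eq' c']
  exact (QuotientGroup.eq.2 hmem).symm

namespace InducedModel

variable (M : InducedModel H σ ρ)

noncomputable def summand (c : G ⧸ H) : V →ₗ[k] W := ρ c.out ∘ₗ M.ι

theorem summand_apply (c : G ⧸ H) (v : V) : M.summand c v = ρ c.out (M.ι v) := rfl

theorem summand_injective (c : G ⧸ H) : Function.Injective (M.summand c) :=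
  (ρ.apply_injective _).comp M.injective

theorem summand_conjRep [hH : H.Normal] (c : G ⧸ H) (h : H) (v : V) :
    M.summand c (ConjRep hH c.out⁻¹ σ h v) = ρ h (M.summand c v) := by
  simp only [summand_apply, conjRep_apply, M.equivariant, conjHom_apply_coe,
    ← Module.End.mul_apply, ← map_mul]
  group

theorem rep_apply_ι (g : G) (v : V) :
    ρ g (M.ι v) = M.summand g (σ ⟨(g : G ⧸ H).out⁻¹ * g,
      QuotientGroup.eq.1 (QuotientGroup.out_eq' _)⟩ v) := by
  rw [summand_apply, M.equivariant, ← Module.End.mul_apply, ← map_mul, mul_inv_cancel_left]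

theorem isInternal [DecidableEq (G ⧸ H)] :
    DirectSum.IsInternal fun c : G ⧸ H => LinearMap.range (M.summand c) :=
  DirectSum.isInternal_submodule_of_iSupIndep_of_iSup_eq_top M.iSupIndep M.iSup_eq_top

theorem ext {N : Type*} [AddCommGroup N] [Module k N] {F F' : W →ₗ[k] N}
    (h : ∀ c v, F (M.summand c v) = F' (M.summand c v)) : F = F' := by
  have hle : ⨆ c : G ⧸ H, LinearMap.range (M.summand c) ≤ LinearMap.eqLocus F F' :=
    iSup_le fun c => by
      rintro - ⟨v, rfl⟩
      exact h c v
  exact LinearMap.ext fun w => hle (M.iSup_eq_top ▸ Submodule.mem_top)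

open scoped Classical in
noncomputable def equivDirectSum : (⨁ _ : G ⧸ H, V) ≃ₗ[k] W :=
  (DFinsupp.mapRange.linearEquiv fun c => LinearEquiv.ofInjective _ (M.summand_injective c)).trans
    (LinearEquiv.ofBijective (coeLinearMap _) M.isInternal)

open scoped Classical in
theorem equivDirectSum_lof (c : G ⧸ H) (v : V) :
    M.equivDirectSum (lof k _ (fun _ => V) c v) = M.summand c v := by
  change coeLinearMap (fun c => LinearMap.range (M.summand c))
    (DFinsupp.mapRange (fun c x => LinearEquiv.ofInjective _ (M.summand_injective c) x)
      (fun c => map_zero _) (DFinsupp.single (β := fun _ => V) c v)) = _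
  rw [DFinsupp.mapRange_single]
  exact coeLinearMap_of _ c _

theorem repIso (M : InducedModel H σ ρ) {W' : Type*} [AddCommGroup W'] [Module k W']
    {ρ' : Representation k G W'} (M' : InducedModel H σ ρ') : RepIso ρ ρ' := by
  classical
  let e := M.equivDirectSum.symm.trans M'.equivDirectSum
  have he : ∀ c v, e (M.summand c v) = M'.summand c v := fun c v => by
    simp [e, ← equivDirectSum_lof]
  have heρ : ∀ g v, e (ρ g (M.ι v)) = ρ' g (M'.ι v) := fun g v => by
    rw [M.rep_apply_ι, M'.rep_apply_ι, he]
  refine ⟨e, fun g => LinearMap.congr_fun (M.ext (F := e.toLinearMap ∘ₗ ρ g)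
    (F' := ρ' g ∘ₗ e.toLinearMap) fun c v => ?_)⟩
  simp only [LinearMap.comp_apply, LinearEquiv.coe_coe, summand_apply, ← Module.End.mul_apply,
    ← map_mul, heρ]

theorem eq_top_of_range_summand_le {U : Submodule k W} (hU : ∀ g, ∀ w ∈ U, ρ g w ∈ U)
    {c : G ⧸ H} (hc : LinearMap.range (M.summand c) ≤ U) : U = ⊤ := by
  rw [eq_top_iff, ← M.iSup_eq_top]
  refine iSup_le fun c' => ?_
  rintro - ⟨v, rfl⟩
  have := hU (c'.out * c.out⁻¹) _ (hc ⟨v, rfl⟩)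
  rwa [summand_apply, ← Module.End.mul_apply, ← map_mul, inv_mul_cancel_right] at this

theorem repIrred [hH : H.Normal] (M : InducedModel H σ ρ) (hσ : RepIrred σ)
    (hstab : ∀ x ∉ H, ¬ RepIso (ConjRep hH x σ) σ) : RepIrred ρ := by
  classical
  have := hσ.1
  refine ⟨M.injective.nontrivial, fun U hU => or_iff_not_imp_left.2 fun hU0 => ?_⟩
  obtain ⟨c, hc⟩ := exists_range_le_of_isInternal (τ := ρ.comp H.subtype)
    M.summand_injective M.summand_conjRep (fun c => hσ.conjRep hH _)
    (fun c c' => not_repIso_conjRep_out_inv hstab) M.isInternal (fun h => hU h) hU0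
  exact M.eq_top_of_range_summand_le hU hc

end InducedModel

end Induced

section Orbit

variable {k : Type*} [Field k] {G : Type*} [Group G] {H : Subgroup G} [hH : H.Normal]
  {V : Type*} [AddCommGroup V] [Module k V]

theorem repIso_conjRep_of_mk_eq (η : Representation k H V) {x y : G}
    (hxy : (x : G ⧸ H) = y) : RepIso (ConjRep hH x η) (ConjRep hH y η) := by
  have hy : y = x * (x⁻¹ * y) := (mul_inv_cancel_left x y).symm
  rw [hy, ← conjRep_conjRep]
  exact (repIso_conjRep_of_mem hH _ (QuotientGroup.eq.1 hxy)).symm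

-- The `g i` lie in pairwise distinct cosets, hence in all `p = [G : H]` of them.
theorem not_repIso_conjRep_of_notMem {p : ℕ} (hidx : H.index = p) {η : Representation k H V}
    {g : Fin p → G} (hdist : ∀ i j, i ≠ j → ¬ RepIso (ConjRep hH (g i) η) (ConjRep hH (g j) η))
    (horb : ∀ y : G, ∃ i, RepIso (ConjRep hH y η) (ConjRep hH (g i) η)) {x : G} (hx : x ∉ H) :
    ¬ RepIso (ConjRep hH x η) η := by
  have hinj : Function.Injective fun i => (g i : G ⧸ H) := fun i j hij =>
    by_contra fun hne => hdist i j hne (repIso_conjRep_of_mk_eq η hij)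
  have : H.FiniteIndex := ⟨hidx ▸ (horb 1).choose.pos.ne'⟩
  have hsurj := (hinj.bijective_of_nat_card_le (by
    rw [Nat.card_fin, ← hidx, H.index_eq_card])).2
  intro hiso
  obtain ⟨i, hi⟩ := hsurj x
  obtain ⟨j, hj⟩ := hsurj 1
  have hij : i = j := by_contra fun hne => hdist i j hne <|
    ((repIso_conjRep_of_mk_eq η hi).trans hiso).trans
      ((conjRep_one hH η ▸ repIso_conjRep_of_mk_eq η hj).symm)
  exact hx (QuotientGroup.eq_one_iff x |>.1 (hi ▸ hij ▸ hj))

end Orbit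

theorem stmt_1_general {F : Type*} [Field F] {G : Type*} [Group G]
    (p : ℕ) (H : Subgroup G) [hH : H.Normal] (hidx : H.index = p)
    {V : Type*} [AddCommGroup V] [Module F V]
    (η : Representation F H V) (hirr : RepIrred η)
    (g : Fin p → G)
    (hdist : ∀ i j, i ≠ j → ¬ RepIso (ConjRep hH (g i) η) (ConjRep hH (g j) η))
    (horb : ∀ y : G, ∃ i, RepIso (ConjRep hH y η) (ConjRep hH (g i) η)) :
    (∀ (i : Fin p) {W : Type*} [AddCommGroup W] [Module F W] (ρ : Representation F G W),
        IsInducedFrom H (ConjRep hH (g i) η) ρ → RepIrred ρ) ∧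
    (∀ (i j : Fin p) {W W' : Type*} [AddCommGroup W] [Module F W]
        [AddCommGroup W'] [Module F W']
        (ρ : Representation F G W) (ρ' : Representation F G W'),
        IsInducedFrom H (ConjRep hH (g i) η) ρ → IsInducedFrom H (ConjRep hH (g j) η) ρ' →
        RepIso ρ ρ') := by
  have hstab : ∀ x ∉ H, ¬ RepIso (ConjRep hH x η) η := fun x =>
    not_repIso_conjRep_of_notMem hidx hdist horb
  refine ⟨fun i W _ _ ρ hρ => ?_, fun i j W W' _ _ _ _ ρ ρ' hρ hρ' => ?_⟩
  · obtain ⟨M⟩ := hρ.of_conjRep.nonempty_inducedModel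
    exact M.repIrred hirr hstab
  · obtain ⟨M⟩ := hρ.of_conjRep.nonempty_inducedModel
    obtain ⟨M'⟩ := hρ'.of_conjRep.nonempty_inducedModel
    exact M.repIso M'

/-- If the `G/H`-orbit of the irreducible representation `η` consists of `p`
distinct points `η = η_1, …, η_p`, then the induced representations `η_i↑` are all equivalent
to a common representation, which is irreducible. -/
theorem stmt_1 {F : Type*} [Field F] [IsAlgClosed F] {G : Type*} [Group G] [Fintype G]
    (hchar : CharZero F ∨ Nat.Coprime (ringChar F) (Fintype.card G))
    (p : ℕ) (hp : p.Prime) (H : Subgroup G) [hH : H.Normal] (hidx : H.index = p)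
    {V : Type*} [AddCommGroup V] [Module F V]
    (η : Representation F H V) (hirr : RepIrred η)
    (g : Fin p → G) (hg1 : g ⟨0, hp.pos⟩ = 1)
    (hdist : ∀ i j, i ≠ j → ¬ RepIso (ConjRep hH (g i) η) (ConjRep hH (g j) η))
    (horb : ∀ y : G, ∃ i, RepIso (ConjRep hH y η) (ConjRep hH (g i) η)) :
    (∀ (i : Fin p) {W : Type*} [AddCommGroup W] [Module F W] (ρ : Representation F G W),
        IsInducedFrom H (ConjRep hH (g i) η) ρ → RepIrred ρ) ∧
    (∀ (i j : Fin p) {W W' : Type*} [AddCommGroup W] [Module F W]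
        [AddCommGroup W'] [Module F W']
        (ρ : Representation F G W) (ρ' : Representation F G W'),
        IsInducedFrom H (ConjRep hH (g i) η) ρ → IsInducedFrom H (ConjRep hH (g j) η) ρ' →
        RepIso ρ ρ') :=
  stmt_1_general p H (hH := hH) hidx η hirr g hdist horb
end

section
/- Let F be a field of characteristic 0 or coprime to n, and let Φ_n(X) = f_1(X) ⋯ f_k(X) be the factorization of the n-th cyclotomic polynomial into irreducible factors over F, each of degree s. Then there exist natural numbers r_1 = 1, r_2, …, r_s such that for every index i and every root ζ of f_i(X) (in a splitting field), the set of roots of f_i(X) is exactly {ζ^{r_1}, ζ^{r_2}, …, ζ^{r_s}}; in particular the exponent set {r_1, …, r_s} is independent of the choice of the irreducible factor f_i and of the choice of root ζ of f_i. -/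
open scoped TensorProduct

/-! Every root of an irreducible factor `p` of `Φ_n` is a primitive `n`-th root of unity `ζ`,
so the roots of `p` are among the `ζ ^ t` with `1 ≤ t ≤ n`, and `ζ ^ t` is a root exactly when
`p ∣ p(X ^ t)`. This divisibility does not depend on the factor: if `ζ` and `ξ = ζ ^ a` are
roots of `p` and `q` in an algebraic closure and `ζ ^ t` is a conjugate of `ζ`, then
`(ζ ^ t) ^ a = ξ ^ t` is a conjugate of `ξ`. Since `X ^ n - 1` is separable, there are exactly
`deg p` such `t`. -/

theorem IsPrimitiveRoot.injOn_pow_Icc {M : Type*} [CommMonoid M] {ζ : M} {n : ℕ}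
    (hζ : IsPrimitiveRoot ζ n) : Set.InjOn (ζ ^ ·) (Finset.Icc 1 n) := by
  intro a ha b hb hab
  simp only [Finset.coe_Icc, Set.mem_Icc] at ha hb
  have hmod := ((hζ.isOfFinOrder (by omega)).pow_eq_pow_iff_modEq).1 hab
  rw [← hζ.eq_orderOf] at hmod
  exact hmod.eq_of_abs_lt (abs_sub_lt_iff.2 ⟨by omega, by omega⟩)

theorem IsPrimitiveRoot.exists_mem_Icc_pow_eq {R : Type*} [CommRing R] [IsDomain R] {ζ ξ : R}
    {n : ℕ} [NeZero n] (hζ : IsPrimitiveRoot ζ n) (hξ : ξ ^ n = 1) :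
    ∃ t ∈ Finset.Icc 1 n, ζ ^ t = ξ := by
  obtain ⟨t, htn, rfl⟩ := hζ.eq_pow_of_pow_eq_one hξ
  rcases t.eq_zero_or_pos with rfl | ht
  · exact ⟨n, Finset.mem_Icc.2 ⟨NeZero.pos n, le_rfl⟩, by rw [hζ.pow_eq_one, pow_zero]⟩
  · exact ⟨t, Finset.mem_Icc.2 ⟨ht, htn.le⟩, rfl⟩

theorem neZero_natCast_of_charZero_or_coprime {F : Type*} [Field F] {n : ℕ} (hn : 0 < n)
    (h : CharZero F ∨ (ringChar F).Coprime n) : NeZero (n : F) := by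
  rcases h with h | h
  · exact ⟨Nat.cast_ne_zero.2 hn.ne'⟩
  · exact ⟨fun h0 => CharP.ringChar_ne_one (h.eq_one_of_dvd (ringChar.dvd h0))⟩

namespace Polynomial

variable {F : Type*} [Field F]

theorem cyclotomic_ne_one {n : ℕ} (hn : 0 < n) : cyclotomic n F ≠ 1 := fun h => by
  simpa [h, (Nat.totient_pos.2 hn).ne] using natDegree_cyclotomic n F

theorem _root_.Irreducible.dvd_comp_X_pow_iff {K : Type*} [Field K] [Algebra F K] {p : F[X]}
    (hp : Irreducible p) {ζ : K} (hζ : aeval ζ p = 0) (t : ℕ) :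
    p ∣ p.comp (X ^ t) ↔ aeval (ζ ^ t) p = 0 := by
  rw [← hp.dvd_iff_aeval_eq_zero hζ, aeval_comp, map_pow, aeval_X]

open Classical in
/-- For irreducible `p`, the `t ∈ [1, n]` for which `ζ ↦ ζ ^ t` maps the roots of `p` to roots
of `p`. -/
noncomputable def rootExponents (p : F[X]) (n : ℕ) : Finset ℕ :=
  (Finset.Icc 1 n).filter fun t => p ∣ p.comp (X ^ t)

theorem mem_rootExponents {p : F[X]} {n t : ℕ} :
    t ∈ p.rootExponents n ↔ t ∈ Finset.Icc 1 n ∧ p ∣ p.comp (X ^ t) := by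
  classical exact Finset.mem_filter

theorem one_mem_rootExponents (p : F[X]) {n : ℕ} (hn : 0 < n) : 1 ∈ p.rootExponents n :=
  mem_rootExponents.2 ⟨Finset.mem_Icc.2 ⟨le_rfl, hn⟩, by rw [pow_one, comp_X]⟩

variable {n : ℕ} [NeZero (n : F)]

theorem isPrimitiveRoot_of_dvd_cyclotomic {K : Type*} [Field K] [Algebra F K] {p : F[X]}
    (hp : p ∣ cyclotomic n F) {ζ : K} (hζ : aeval ζ p = 0) : IsPrimitiveRoot ζ n := by
  have := NeZero.of_faithfulSMul F K n
  rw [← isRoot_cyclotomic_iff, ← map_cyclotomic n (algebraMap F K), IsRoot,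
    eval_map_algebraMap]
  exact aeval_eq_zero_of_dvd_aeval_eq_zero hp hζ

theorem dvd_comp_X_pow_of_dvd_cyclotomic {p q : F[X]} (hp : Irreducible p) (hq : Irreducible q)
    (hpn : p ∣ cyclotomic n F) (hqn : q ∣ cyclotomic n F) {t : ℕ} (h : p ∣ p.comp (X ^ t)) :
    q ∣ q.comp (X ^ t) := by
  have := NeZero.of_neZero_natCast F (n := n)
  obtain ⟨ζ, hζ⟩ := IsAlgClosed.exists_aeval_eq_zero (AlgebraicClosure F) p
    (degree_pos_of_irreducible hp).ne'
  obtain ⟨ξ, hξ⟩ := IsAlgClosed.exists_aeval_eq_zero (AlgebraicClosure F) q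
    (degree_pos_of_irreducible hq).ne'
  obtain ⟨a, -, rfl⟩ := (isPrimitiveRoot_of_dvd_cyclotomic hpn hζ).eq_pow_of_pow_eq_one
    (isPrimitiveRoot_of_dvd_cyclotomic hqn hξ).pow_eq_one
  rw [hp.dvd_comp_X_pow_iff hζ] at h
  have hpa : p ∣ q.comp (X ^ a) :=
    (hp.dvd_iff_aeval_eq_zero hζ).1 (by rwa [aeval_comp, map_pow, aeval_X])
  rw [hq.dvd_comp_X_pow_iff hξ, ← pow_mul, mul_comm, pow_mul]
  simpa [aeval_comp] using aeval_eq_zero_of_dvd_aeval_eq_zero hpa h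


theorem rootExponents_eq_of_dvd_cyclotomic {p q : F[X]} (hp : Irreducible p)
    (hpn : p ∣ cyclotomic n F) (hq : Irreducible q) (hqn : q ∣ cyclotomic n F) :
    p.rootExponents n = q.rootExponents n := by
  ext t
  simp only [mem_rootExponents]
  exact and_congr_right fun _ => ⟨dvd_comp_X_pow_of_dvd_cyclotomic hp hq hpn hqn,
    dvd_comp_X_pow_of_dvd_cyclotomic hq hp hqn hpn⟩

theorem setOf_aeval_eq_zero_eq_image_rootExponents {p : F[X]} (hp : Irreducible p)
    (hpn : p ∣ cyclotomic n F) {K : Type*} [Field K] [Algebra F K] {ζ : K}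
    (hζ : aeval ζ p = 0) : {z : K | aeval z p = 0} = (ζ ^ ·) '' p.rootExponents n := by
  have := NeZero.of_neZero_natCast F (n := n)
  ext z
  constructor
  · intro hz
    obtain ⟨t, ht, rfl⟩ := (isPrimitiveRoot_of_dvd_cyclotomic hpn hζ).exists_mem_Icc_pow_eq
      (isPrimitiveRoot_of_dvd_cyclotomic hpn hz).pow_eq_one
    exact ⟨t, mem_rootExponents.2 ⟨ht, (hp.dvd_comp_X_pow_iff hζ t).2 hz⟩, rfl⟩
  · rintro ⟨t, ht, rfl⟩
    exact (hp.dvd_comp_X_pow_iff hζ t).1 (mem_rootExponents.1 ht).2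

theorem card_rootExponents {p : F[X]} (hp : Irreducible p) (hpn : p ∣ cyclotomic n F) :
    (p.rootExponents n).card = p.natDegree := by
  obtain ⟨ζ, hζ⟩ := IsAlgClosed.exists_aeval_eq_zero (AlgebraicClosure F) p
    (degree_pos_of_irreducible hp).ne'
  have hsep : p.Separable := (X_pow_sub_one_separable_iff.2 (NeZero.ne _)).of_dvd
    (hpn.trans (cyclotomic.dvd_X_pow_sub_one n F))
  have hinj : Set.InjOn (ζ ^ ·) (p.rootExponents n) :=
    (isPrimitiveRoot_of_dvd_cyclotomic hpn hζ).injOn_pow_Icc.mono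
      fun t ht => (mem_rootExponents.1 ht).1
  calc (p.rootExponents n).card = ((ζ ^ ·) '' p.rootExponents n).ncard := by
        rw [hinj.ncard_image, Set.ncard_coe_finset]
    _ = (p.rootSet (AlgebraicClosure F)).ncard := by
        rw [← setOf_aeval_eq_zero_eq_image_rootExponents hp hpn hζ]
        congr 1
        ext z
        exact (mem_rootSet_of_ne hp.ne_zero).symm
    _ = p.natDegree := by
        rw [← Nat.card_coe_set_eq, Nat.card_eq_fintype_card,
          card_rootSet_eq_natDegree hsep (IsAlgClosed.splits _)]

end Polynomial

theorem stmt_13_general {F : Type*} [Field F] (n : ℕ) (hn : 0 < n)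
    (hchar : CharZero F ∨ Nat.Coprime (ringChar F) n)
    (k s : ℕ) (f : Fin k → Polynomial F) (hirr : ∀ i, Irreducible (f i))
    (hfac : Polynomial.cyclotomic n F = ∏ i, f i)
    (hdeg : ∀ i, (f i).natDegree = s) :
    ∃ R : Finset ℕ, 1 ∈ R ∧ R.card = s ∧
      ∀ (i : Fin k) (K : Type*) [Field K] [Algebra F K],
        Polynomial.Splits ((f i).map (algebraMap F K)) →
        ∀ ζ : K, Polynomial.aeval ζ (f i) = 0 →
          {z : K | Polynomial.aeval z (f i) = 0} = (fun t : ℕ => ζ ^ t) '' ↑R := by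
  have := neZero_natCast_of_charZero_or_coprime hn hchar
  have hdvd : ∀ i, f i ∣ Polynomial.cyclotomic n F := fun i =>
    hfac ▸ Finset.dvd_prod_of_mem f (Finset.mem_univ i)
  obtain ⟨i₀⟩ : Nonempty (Fin k) := by
    by_contra h
    rw [not_nonempty_iff] at h
    exact Polynomial.cyclotomic_ne_one hn (by simpa using hfac)
  refine ⟨(f i₀).rootExponents n, Polynomial.one_mem_rootExponents _ hn, ?_,
    fun i K _ _ _ ζ hζ => ?_⟩
  · rw [Polynomial.card_rootExponents (hirr i₀) (hdvd i₀), hdeg]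
  · rw [Polynomial.rootExponents_eq_of_dvd_cyclotomic (hirr i₀) (hdvd i₀) (hirr i) (hdvd i)]
    exact Polynomial.setOf_aeval_eq_zero_eq_image_rootExponents (hirr i) (hdvd i) hζ

/-- There is a single exponent set `{r_1 = 1, r_2, …, r_s}` of natural numbers
such that, for every irreducible factor `f_i` of `Φ_n` over `F` and every root `ζ` of `f_i` in
a splitting field, the set of roots of `f_i` is exactly `{ζ^{r_1}, …, ζ^{r_s}}`. -/
theorem stmt_13 {F : Type*} [Field F] (n : ℕ) (hn : 0 < n)
    (hchar : CharZero F ∨ Nat.Coprime (ringChar F) n)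
    (k s : ℕ) (f : Fin k → Polynomial F) (hirr : ∀ i, Irreducible (f i))
    (hmonic : ∀ i, (f i).Monic)
    (hfac : Polynomial.cyclotomic n F = ∏ i, f i)
    (hdeg : ∀ i, (f i).natDegree = s) :
    ∃ R : Finset ℕ, 1 ∈ R ∧ R.card = s ∧
      ∀ (i : Fin k) (K : Type*) [Field K] [Algebra F K],
        Polynomial.Splits ((f i).map (algebraMap F K)) →
        ∀ ζ : K, Polynomial.aeval ζ (f i) = 0 →
          {z : K | Polynomial.aeval z (f i) = 0} = (fun t : ℕ => ζ ^ t) '' ↑R :=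
  stmt_13_general n hn hchar k s f hirr hfac hdeg
end

section
/- Let G be a finite group, H a normal subgroup of prime index p, x in G a lift of a generator of G/H, and F a field of characteristic 0 or coprime to |G| with algebraic closure F̄. Let η be an irreducible F-representation of H with η ≅ η^x, and write η ⊗_F F̄ ≅ m(η_1 ⊕ … ⊕ η_k) with the η_i pairwise inequivalent irreducible F̄-representations that are Galois conjugate over F. Then exactly one of the following holds: either η_i is not equivalent to η_i^x for every i, 1 ≤ i ≤ k, or η_i is equivalent to η_i^x for every i, 1 ≤ i ≤ k. -/
open scoped TensorProduct

section Aux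

variable {k : Type*} [Field k] {M : Type*} [Monoid M] {G : Type*} [Group G]

/-- A Galois twist of conjugate representations is the conjugate of the twist. -/
lemma isTwist_conjRep {F E : Type*} [Field F] [Field E] [Algebra F E]
    {H : Subgroup G} (hH : H.Normal) (x : G)
    {V W : Type*} [AddCommGroup V] [Module E V] [AddCommGroup W] [Module E W]
    (γ : E ≃ₐ[F] E) {ρ : Representation E H V} {ρ' : Representation E H W}
    (h : IsTwist γ ρ ρ') : IsTwist γ (ConjRep hH x ρ) (ConjRep hH x ρ') := by
  obtain ⟨e, he1, he2⟩ := h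
  exact ⟨e, he1, fun g v => he2 (conjHom hH x g) v⟩

/-- RepIso transfers along twists by the same automorphism. -/
lemma repIso_of_twists {F E : Type*} [Field F] [Field E] [Algebra F E]
    {V₁ V₂ V₁' V₂' : Type*} [AddCommGroup V₁] [Module E V₁] [AddCommGroup V₂] [Module E V₂]
    [AddCommGroup V₁'] [Module E V₁'] [AddCommGroup V₂'] [Module E V₂']
    (γ : E ≃ₐ[F] E) {ρ₁ : Representation E M V₁} {ρ₂ : Representation E M V₂}
    {ρ₁' : Representation E M V₁'} {ρ₂' : Representation E M V₂'}
    (h₁ : IsTwist γ ρ₁ ρ₂) (h₂ : IsTwist γ ρ₁' ρ₂')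
    (hiso : RepIso ρ₁ ρ₁') : RepIso ρ₂ ρ₂' := by
  obtain ⟨e₁, he₁s, he₁r⟩ := h₁
  obtain ⟨e₂, he₂s, he₂r⟩ := h₂
  obtain ⟨L, hL⟩ := hiso
  have hsymm : ∀ (c : E) (w : V₂), e₁.symm (c • w) = γ.symm c • e₁.symm w := by
    intro c w
    apply e₁.injective
    rw [e₁.apply_symm_apply, he₁s, AlgEquiv.apply_symm_apply, e₁.apply_symm_apply]
  refine ⟨LinearEquiv.mk
    { (e₁.symm.trans (L.toAddEquiv.trans e₂)) with
      map_smul' := ?_ } (e₁.symm.trans (L.toAddEquiv.trans e₂)).symm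
      (e₁.symm.trans (L.toAddEquiv.trans e₂)).left_inv
      (e₁.symm.trans (L.toAddEquiv.trans e₂)).right_inv, ?_⟩
  · intro c w
    show e₂ (L (e₁.symm (c • w))) = c • e₂ (L (e₁.symm w))
    rw [hsymm, map_smul, he₂s, AlgEquiv.apply_symm_apply]
  · intro g v
    show e₂ (L (e₁.symm (ρ₂ g v))) = ρ₂' g (e₂ (L (e₁.symm v)))
    have h1 : e₁.symm (ρ₂ g v) = ρ₁ g (e₁.symm v) := by
      apply e₁.injective
      rw [e₁.apply_symm_apply, he₁r, e₁.apply_symm_apply]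
    rw [h1, hL, he₂r]

/-- Self-conjugacy transfers along Galois conjugacy. -/
lemma selfconj_transfer {F E : Type*} [Field F] [Field E] [Algebra F E]
    {H : Subgroup G} (hH : H.Normal) (x : G)
    {V W : Type*} [AddCommGroup V] [Module E V] [AddCommGroup W] [Module E W]
    {ρ : Representation E H V} {ρ' : Representation E H W}
    (hg : IsGaloisConj F ρ ρ') (hs : RepIso ρ (ConjRep hH x ρ)) :
    RepIso ρ' (ConjRep hH x ρ') := by
  obtain ⟨γ, hγ⟩ := hg
  exact repIso_of_twists γ hγ (isTwist_conjRep hH x γ hγ) hs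

end Aux

/-- If `η ≅ η^x` then, in the decomposition `η ⊗_F F̄ ≅ m(η_1 ⊕ … ⊕ η_k)`,
exactly one of the following holds: no `η_i` is equivalent to `η_i^x`, or every `η_i` is
equivalent to `η_i^x`. -/
theorem stmt_14 {F : Type*} [Field F] {G : Type*} [Group G] [Fintype G]
    (hchar : CharZero F ∨ Nat.Coprime (ringChar F) (Fintype.card G))
    (p : ℕ) (hp : p.Prime) (H : Subgroup G) [hH : H.Normal] (hidx : H.index = p)
    (x : G) (hx : Subgroup.zpowers ((x : G ⧸ H)) = ⊤)
    {V : Type*} [AddCommGroup V] [Module F V]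
    (η : Representation F H V) (hirr : RepIrred η)
    (hself : RepIso η (ConjRep hH x η))
    (k m : ℕ) {W : Fin k → Type*} [∀ i, AddCommGroup (W i)]
    [∀ i, Module (AlgebraicClosure F) (W i)]
    (ηs : ∀ i, Representation (AlgebraicClosure F) H (W i))
    (hirrs : ∀ i, RepIrred (ηs i))
    (hsdist : ∀ i j, i ≠ j → ¬ RepIso (ηs i) (ηs j))
    (hgal : ∀ i j, IsGaloisConj F (ηs i) (ηs j))
    (hdec : RepIso (BaseChangeRep (AlgebraicClosure F) η)
      (PiRep fun q : Fin m × Fin k => ηs q.2))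
    :
    Xor' (∀ i, ¬ RepIso (ηs i) (ConjRep hH x (ηs i)))
      (∀ i, RepIso (ηs i) (ConjRep hH x (ηs i))) := by
  -- First show `Fin k` is nonempty.
  haveI hVnt : Nontrivial V := hirr.1
  have htens : Nontrivial (AlgebraicClosure F ⊗[F] V) := by
    let b := Module.Free.chooseBasis F V
    haveI : Nonempty (Module.Free.ChooseBasisIndex F V) := b.index_nonempty
    obtain ⟨i⟩ := ‹Nonempty (Module.Free.ChooseBasisIndex F V)›
    exact nontrivial_of_ne ((Algebra.TensorProduct.basis (AlgebraicClosure F) b) i) 0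
      ((Algebra.TensorProduct.basis (AlgebraicClosure F) b).ne_zero i)
  have hk : Nonempty (Fin k) := by
    by_contra hne
    haveI : IsEmpty (Fin k) := not_nonempty_iff.mp hne
    haveI : IsEmpty (Fin m × Fin k) := Prod.isEmpty_right
    haveI : Subsingleton (∀ q : Fin m × Fin k, W q.2) :=
      (Pi.uniqueOfIsEmpty _).instSubsingleton
    obtain ⟨e, -⟩ := hdec
    obtain ⟨a, b, hab⟩ := htens
    exact hab (e.injective (Subsingleton.elim _ _))
  obtain ⟨i0⟩ := hk
  by_cases hP : RepIso (ηs i0) (ConjRep hH x (ηs i0))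
  · exact Or.inr ⟨fun i => selfconj_transfer hH x (hgal i0 i) hP, fun hA => hA i0 hP⟩
  · exact Or.inl ⟨fun i hi => hP (selfconj_transfer hH x (hgal i i0) hi),
      fun hB => hP (hB i0)⟩
end

section
/- Let G be a finite group, H a normal subgroup of prime index p, x in G a lift of a generator of G/H, and F a field of characteristic 0 or coprime to |G| with algebraic closure F̄. Let η be an irreducible F-representation of H with η ⊗_F F̄ ≅ m(η_1 ⊕ … ⊕ η_k), the η_i Galois conjugate over F, and suppose each e_{η_i} is central in F̄[G], so that (C̄(x))^p e_{η_i} = λ_i e_{η_i} with λ_i ≠ 0; let μ_i be a p-th root of λ_i in F̄. Then either λ_i has a p-th root in F for every i, 1 ≤ i ≤ k — and in that case these p-th roots in F are all equal to a common value μ ∈ F — or λ_i has no p-th root in F for any i, 1 ≤ i ≤ k. -/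
open scoped TensorProduct

/-!
A Galois automorphism `γ` of `F̄/F` twisting `η_i` into `η_j`, applied coefficientwise to `F̄[G]`,
fixes the class sum `C̄(x)` and, by uniqueness of the primitive central idempotent acting as the
identity on `η_j`, carries `e_{η_i}` to `e_{η_j}`. Hence `λ_j = γ(λ_i)`, and if `λ_i = μ^p` with
`μ ∈ F` then `λ_j = γ(μ)^p = μ^p`.
-/

open MonoidAlgebra

lemma IsPrimCentralIdem.map {R S : Type*} [Ring R] [Ring S] (f : R ≃+* S) {e : R}
    (he : IsPrimCentralIdem e) : IsPrimCentralIdem (f e) := by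
  obtain ⟨hne, hidem, hcen, hprim⟩ := he
  refine ⟨(map_ne_zero_iff f f.injective).mpr hne, hidem.map f,
    MulEquivClass.apply_mem_center f hcen, fun g hg hgidem hge => ?_⟩
  have hge' : f.symm g * e = f.symm g := f.injective (by simpa using hge)
  rcases hprim (f.symm g) (MulEquivClass.apply_mem_center f.symm hg) (hgidem.map f.symm) hge'
    with h | h
  · exact .inl (by simpa using congrArg f h)
  · exact .inr (by simpa using congrArg f h)

section MapRingEquiv

variable {E : Type*} [Field E] {M : Type*} [Monoid M] (γ : E ≃+* E)

lemma mapRingEquiv_smul (c : E) (a : MonoidAlgebra E M) :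
    mapRingEquiv M γ (c • a) = γ c • mapRingEquiv M γ a := by
  ext m; simp

lemma eigenvalue_eq_of_mapRingEquiv {c a b : MonoidAlgebra E M} {l l' : E}
    (hc : mapRingEquiv M γ c = c) (hab : mapRingEquiv M γ a = b) (hb : b ≠ 0)
    (ha : c * a = l • a) (hb' : c * b = l' • b) : l' = γ l := by
  have h := congrArg (mapRingEquiv M γ) ha
  rw [map_mul, hc, hab, mapRingEquiv_smul, hab, hb'] at h
  exact smul_left_injective E hb h

end MapRingEquiv

section Twist

variable {E : Type*} [Field E] {M : Type*} [Monoid M]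
  {V W : Type*} [AddCommGroup V] [Module E V] [AddCommGroup W] [Module E W]
  {ρ : Representation E M V} {ρ' : Representation E M W}
  {γ : E ≃+* E} {ψ : V ≃+ W}

lemma asAlgebraHom_apply_of_twist (hψ : ∀ (c : E) (v : V), ψ (c • v) = γ c • ψ v)
    (hρ : ∀ (g : M) (v : V), ψ (ρ g v) = ρ' g (ψ v)) (a : MonoidAlgebra E M) (v : V) :
    ψ (ρ.asAlgebraHom a v) = ρ'.asAlgebraHom (mapRingEquiv M γ a) (ψ v) := by
  induction a using MonoidAlgebra.induction_linear with
  | zero => simp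
  | add a b ha hb => simp only [map_add, LinearMap.add_apply, ha, hb]
  | single g r => simp [hψ, hρ]

lemma IsIdemFor.of_twist (hψ : ∀ (c : E) (v : V), ψ (c • v) = γ c • ψ v)
    (hρ : ∀ (g : M) (v : V), ψ (ρ g v) = ρ' g (ψ v)) {a : MonoidAlgebra E M}
    (ha : IsIdemFor ρ a) : IsIdemFor ρ' (mapRingEquiv M γ a) := by
  refine ⟨ha.1.map _, LinearMap.ext fun w => ?_⟩
  simpa [ha.2] using (asAlgebraHom_apply_of_twist hψ hρ a (ψ.symm w)).symm

end Twist

lemma IsIdemFor.unique {E : Type*} [Field E] {M : Type*} [Monoid M] {V : Type*}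
    [AddCommGroup V] [Module E V] [Nontrivial V] {ρ : Representation E M V}
    {a b : MonoidAlgebra E M} (ha : IsIdemFor ρ a) (hb : IsIdemFor ρ b) : a = b := by
  obtain ⟨⟨-, haidem, hacen, haprim⟩, ha1⟩ := ha
  obtain ⟨⟨-, hbidem, hbcen, hbprim⟩, hb1⟩ := hb
  have hcomm : a * b = b * a := (hacen.comm b).eq
  have hcen : a * b ∈ Set.center _ := Set.mul_mem_center hacen hbcen
  have hidem : IsIdempotentElem (a * b) := haidem.mul_of_commute hcomm hbidem
  have hne : a * b ≠ 0 := fun h => by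
    have h1 : ρ.asAlgebraHom (a * b) = 1 := by rw [map_mul, ha1, hb1, one_mul]
    rw [h, map_zero] at h1
    exact zero_ne_one h1
  rcases haprim (a * b) hcen hidem (by rw [hcomm, mul_assoc, haidem.eq]) with h | hab
  · exact absurd h hne
  rcases hbprim (a * b) hcen hidem (by rw [mul_assoc, hbidem.eq]) with h | hba
  · exact absurd h hne
  rw [← hab, hba]

section GroupAlgebra

variable {E : Type*} [Field E] {G : Type*} [Group G] (γ : E ≃+* E)

lemma mapRingEquiv_algEmb (H : Subgroup G) (a : MonoidAlgebra E H) :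
    mapRingEquiv G γ (algEmb E H a) = algEmb E H (mapRingEquiv H γ a) :=
  congrArg (· a) (mapRingHom_comp_mapDomainRingHom (γ : E →+* E) H.subtype)

lemma algEmb_injective (H : Subgroup G) : Function.Injective (algEmb E H) :=
  mapDomain_injective H.subtype_injective

lemma mapRingEquiv_classSum [Fintype G] (x : G) :
    mapRingEquiv G γ (classSum E x) = classSum E x := by
  classical
  simp only [classSum, map_sum, apply_ite (mapRingEquiv G γ), map_zero, mapRingEquiv_single,
    map_one]

end GroupAlgebra

lemma IsTwist.classSum_eigenvalue_eq {F E : Type*} [Field F] [Field E] [Algebra F E]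
    {G : Type*} [Group G] [Fintype G] {H : Subgroup G}
    {V W : Type*} [AddCommGroup V] [Module E V] [AddCommGroup W] [Module E W] [Nontrivial W]
    {ρ : Representation E H V} {ρ' : Representation E H W} {γ : E ≃ₐ[F] E}
    (hγ : IsTwist γ ρ ρ') {a b : MonoidAlgebra E H} (ha : IsIdemFor ρ a) (hb : IsIdemFor ρ' b)
    (x : G) (n : ℕ) {l l' : E}
    (hl : classSum E x ^ n * algEmb E H a = l • algEmb E H a)
    (hl' : classSum E x ^ n * algEmb E H b = l' • algEmb E H b) : l' = γ l := by
  obtain ⟨ψ, hψ, hρ⟩ := hγ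
  have hab : mapRingEquiv H γ.toRingEquiv a = b := (ha.of_twist hψ hρ).unique hb
  refine eigenvalue_eq_of_mapRingEquiv γ.toRingEquiv ?_ ?_ ?_ hl hl'
  · rw [map_pow, mapRingEquiv_classSum]
  · rw [mapRingEquiv_algEmb, hab]
  · exact (map_ne_zero_iff _ (algEmb_injective H)).mpr hb.1.1

theorem stmt_16_general {F : Type*} [Field F] {G : Type*} [Group G] [Fintype G]
    (p : ℕ) (H : Subgroup G) (x : G)
    (k : ℕ) {W : Fin k → Type*} [∀ i, AddCommGroup (W i)]
    [∀ i, Module (AlgebraicClosure F) (W i)]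
    (ηs : ∀ i, Representation (AlgebraicClosure F) H (W i))
    (hirrs : ∀ i, RepIrred (ηs i))
    (hgal : ∀ i j, IsGaloisConj F (ηs i) (ηs j))
    (e : Fin k → MonoidAlgebra (AlgebraicClosure F) H)
    (he : ∀ i, IsIdemFor (ηs i) (e i))
    (lam : Fin k → AlgebraicClosure F)
    (hcl : ∀ i, classSum (AlgebraicClosure F) x ^ p * algEmb (AlgebraicClosure F) H (e i)
      = lam i • algEmb (AlgebraicClosure F) H (e i)) :
    (∃ mu : F, ∀ i, algebraMap F (AlgebraicClosure F) mu ^ p = lam i) ∨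
    (∀ i, ¬ ∃ mu : F, algebraMap F (AlgebraicClosure F) mu ^ p = lam i) := by
  by_cases hroot : ∃ i, ∃ mu : F, algebraMap F (AlgebraicClosure F) mu ^ p = lam i
  · obtain ⟨i, mu, hmu⟩ := hroot
    refine .inl ⟨mu, fun j => ?_⟩
    obtain ⟨γ, hγ⟩ := hgal i j
    have : Nontrivial (W j) := (hirrs j).1
    rw [hγ.classSum_eigenvalue_eq (he i) (he j) x p (hcl i) (hcl j), ← hmu, map_pow,
      AlgEquiv.commutes]
  · exact .inr fun i hi => hroot ⟨i, hi⟩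

/-- Either every `λ_i` has a `p`-th root in `F` — and then these roots are all
equal to a common value `μ ∈ F` — or no `λ_i` has a `p`-th root in `F`. -/
theorem stmt_16 {F : Type*} [Field F] {G : Type*} [Group G] [Fintype G]
    (hchar : CharZero F ∨ Nat.Coprime (ringChar F) (Fintype.card G))
    (p : ℕ) (hp : p.Prime) (H : Subgroup G) [hH : H.Normal] (hidx : H.index = p)
    (x : G) (hx : Subgroup.zpowers ((x : G ⧸ H)) = ⊤)
    {V : Type*} [AddCommGroup V] [Module F V]
    (η : Representation F H V) (hirr : RepIrred η)
    (k m : ℕ) {W : Fin k → Type*} [∀ i, AddCommGroup (W i)]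
    [∀ i, Module (AlgebraicClosure F) (W i)]
    (ηs : ∀ i, Representation (AlgebraicClosure F) H (W i))
    (hirrs : ∀ i, RepIrred (ηs i))
    (hsdist : ∀ i j, i ≠ j → ¬ RepIso (ηs i) (ηs j))
    (hgal : ∀ i j, IsGaloisConj F (ηs i) (ηs j))
    (hdec : RepIso (BaseChangeRep (AlgebraicClosure F) η)
      (PiRep fun q : Fin m × Fin k => ηs q.2))
    (e : Fin k → MonoidAlgebra (AlgebraicClosure F) H)
    (he : ∀ i, IsIdemFor (ηs i) (e i))
    (hcents : ∀ i, algEmb (AlgebraicClosure F) H (e i) ∈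
      Set.center (MonoidAlgebra (AlgebraicClosure F) G))
    (lam : Fin k → AlgebraicClosure F) (hlam : ∀ i, lam i ≠ 0)
    (hcl : ∀ i, classSum (AlgebraicClosure F) x ^ p * algEmb (AlgebraicClosure F) H (e i)
      = lam i • algEmb (AlgebraicClosure F) H (e i)) :
    (∃ mu : F, ∀ i, algebraMap F (AlgebraicClosure F) mu ^ p = lam i) ∨
    (∀ i, ¬ ∃ mu : F, algebraMap F (AlgebraicClosure F) mu ^ p = lam i) :=
  stmt_16_general p H x k ηs hirrs hgal e he lam hcl
end
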